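/- arXiv:2401.09585 — 9 statements merged into one kernel-verified Lean document; each statement's English description precedes it below -/
import Mathlib

section
/- Let G be a connected d-regular graph with conductance Φ(G) ≥ φ > 0, let v be a vertex, and for each integer t let B_t be the set of vertices at distance at most t from v and α_t = Σ_{u ∈ B_t} deg(u). If α_t ≤ |E(G)| then α_{t+1} ≥ (1 + φ/2) · α_t. -/
open Finset

/-- The number of edges of `G` crossing from `S` to its complement. -/
def crossEdges {V : Type*} [Fintype V] [DecidableEq V] (G : SimpleGraph V) [DecidableRel G.Adj]
    (S : Finset V) : ℕ :=
  (Finset.univ.filter (fun p : V × V => p.1 ∈ S ∧ p.2 ∉ S ∧ G.Adj p.1 p.2)).card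

/-- The volume of a vertex set: the sum of the degrees of its vertices. -/
def volume {V : Type*} [Fintype V] (G : SimpleGraph V) [DecidableRel G.Adj]
    (S : Finset V) : ℕ :=
  ∑ v ∈ S, G.degree v

/-- The ball of radius `t` around `v`: all vertices at distance at most `t` from `v`. -/
noncomputable def ball {V : Type*} [Fintype V] (G : SimpleGraph V) (v : V) (t : ℕ) : Finset V :=
  Finset.univ.filter (fun u => G.dist v u ≤ t)

/-- Let `G` be a connected `d`-regular graph with conductance at least
`φ > 0`, let `v` be a vertex, `B_t` the ball of radius `t` around `v` and
`α_t = Σ_{u ∈ B_t} deg u`. If `α_t ≤ |E(G)|` then `α_{t+1} ≥ (1 + φ/2) · α_t`. -/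
theorem stmt_2 {V : Type*} [Fintype V] [DecidableEq V] (G : SimpleGraph V) [DecidableRel G.Adj]
    (d : ℕ) (φ : ℝ) (hφ : 0 < φ)
    (hconn : G.Connected) (hreg : ∀ v : V, G.degree v = d)
    (hcond : ∀ S : Finset V, S.Nonempty → S ≠ Finset.univ →
      φ * min (volume G S : ℝ) (volume G Sᶜ : ℝ) ≤ (crossEdges G S : ℝ))
    (v : V) (t : ℕ)
    (hα : (volume G (ball G v t) : ℝ) ≤ (G.edgeFinset.card : ℝ)) :
    (1 + φ / 2) * (volume G (ball G v t) : ℝ) ≤ (volume G (ball G v (t + 1)) : ℝ) := by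
  classical
  set S := ball G v t with hS
  set T := ball G v (t+1) \ S with hT
  have hsub : S ⊆ ball G v (t+1) := by
    intro u hu
    simp only [hS, ball, Finset.mem_filter, Finset.mem_univ, true_and] at hu ⊢
    omega
  have hvolsplit : volume G (ball G v (t+1)) = volume G S + volume G T := by
    unfold volume
    rw [hT, ← Finset.sum_sdiff hsub]
    ring
  have hcross_le : crossEdges G S ≤ volume G T := by
    unfold crossEdges
    have hsubset : (Finset.univ.filter (fun p : V × V => p.1 ∈ S ∧ p.2 ∉ S ∧ G.Adj p.1 p.2))
        ⊆ T.biUnion (fun u => (G.neighborFinset u).image (fun w => (w, u))) := by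
      intro p hp
      simp only [Finset.mem_filter, Finset.mem_univ, true_and] at hp
      obtain ⟨h1, h2, h3⟩ := hp
      have hpT : p.2 ∈ T := by
        simp only [hT, Finset.mem_sdiff]
        refine ⟨?_, h2⟩
        simp only [ball, Finset.mem_filter, Finset.mem_univ, true_and]
        have h1' : G.dist v p.1 ≤ t := by
          simpa only [hS, ball, Finset.mem_filter, Finset.mem_univ, true_and] using h1
        have htri : G.dist v p.2 ≤ G.dist v p.1 + G.dist p.1 p.2 :=
          hconn.dist_triangle
        have hd1 : G.dist p.1 p.2 ≤ 1 := by
          have := SimpleGraph.dist_le h3.toWalk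
          simpa using this
        omega
      rw [Finset.mem_biUnion]
      exact ⟨p.2, hpT, by
        rw [Finset.mem_image]
        exact ⟨p.1, by simp [h3.symm], rfl⟩⟩
    calc _ ≤ (T.biUnion (fun u => (G.neighborFinset u).image (fun w => (w, u)))).card :=
          Finset.card_le_card hsubset
      _ ≤ ∑ u ∈ T, ((G.neighborFinset u).image (fun w => (w, u))).card :=
          Finset.card_biUnion_le
      _ ≤ ∑ u ∈ T, G.degree u := by
          refine Finset.sum_le_sum fun u _ => ?_
          exact le_of_le_of_eq Finset.card_image_le (G.card_neighborFinset_eq_degree u)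
      _ = volume G T := rfl
  have hcompl : (volume G S : ℝ) + (volume G Sᶜ : ℝ) = 2 * G.edgeFinset.card := by
    have : volume G S + volume G Sᶜ = 2 * G.edgeFinset.card := by
      unfold volume
      rw [Finset.sum_add_sum_compl]
      exact_mod_cast G.sum_degrees_eq_twice_card_edges
    exact_mod_cast this
  by_cases hSuniv : S = Finset.univ
  · have h2 : (volume G S : ℝ) = 2 * G.edgeFinset.card := by
      have h0 : (volume G Sᶜ : ℝ) = 0 := by
        rw [hSuniv, Finset.compl_univ]
        norm_cast
      linarith [hcompl]
    have hE : (G.edgeFinset.card : ℝ) ≤ 0 := by linarith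
    have hE0 : (volume G S : ℝ) = 0 := by
      have : (0:ℝ) ≤ (G.edgeFinset.card : ℝ) := by positivity
      nlinarith
    rw [hE0]
    simp only [mul_zero]
    positivity
  · have hne : S.Nonempty := by
      refine ⟨v, ?_⟩
      simp [hS, ball, SimpleGraph.dist_self]
    have hmin : min (volume G S : ℝ) (volume G Sᶜ : ℝ) = (volume G S : ℝ) := by
      rw [min_eq_left]
      linarith
    have hkey := hcond S hne hSuniv
    rw [hmin] at hkey
    have hcrossT : (crossEdges G S : ℝ) ≤ (volume G T : ℝ) := by exact_mod_cast hcross_le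
    have hsplit' : (volume G (ball G v (t+1)) : ℝ) = (volume G S : ℝ) + (volume G T : ℝ) := by
      exact_mod_cast hvolsplit
    have hx : (0:ℝ) ≤ (volume G S : ℝ) := by positivity
    nlinarith
end

section
/- If a graph G has girth greater than g, and t, t₁, t₂, t₃ are vertices such that the sum of the three pairwise distances dist(t₁,t₂) + dist(t₂,t₃) + dist(t₁,t₃) is strictly less than g, then any point p lying on a shortest path between t₁ and t₂ must also lie on a shortest path between t₁ and t₃ or on a shortest path between t₂ and t₃. -/
open SimpleGraph Walk

/-- If every cycle has length `> g` and `P` is a path and `W` a walk with the same endpoints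
whose total length is `< g`, then every vertex of `P` lies on `W`. -/
lemma key_lemma {V : Type*} {G : SimpleGraph V} {g : ℕ}
    (hG : ∀ (a : V) (w : G.Walk a a), w.IsCycle → g < w.length)
    {u v : V} (P W : G.Walk u v) (hP : P.IsPath) (hlen : P.length + W.length < g) :
    ∀ x ∈ P.support, x ∈ W.support := by
  classical
  set C : G.Walk u u := P.append W.reverse with hC
  have hCedges : C.edges = P.edges ++ W.reverse.edges := edges_append _ _
  have hClen : C.length = P.length + W.length := by
    simp [hC, length_append]
  set G' : SimpleGraph V := C.toSubgraph.spanningCoe with hG'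
  have hedge : ∀ e, e ∈ G'.edgeSet ↔ e ∈ C.edges := by
    refine Sym2.ind fun a b => ?_
    rw [SimpleGraph.mem_edgeSet]
    change C.toSubgraph.Adj a b ↔ _
    rw [← SimpleGraph.Subgraph.mem_edgeSet, edgeSet_toSubgraph]
    rfl
  -- G' is acyclic
  have hacyc : G'.IsAcyclic := by
    intro a w hw
    have hmap : (w.mapLe C.toSubgraph.spanningCoe_le).IsCycle := hw.mapLe _
    have hglt : g < w.length := by
      have := hG a (w.mapLe C.toSubgraph.spanningCoe_le) hmap
      simpa [Walk.mapLe] using this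
    -- but w's edges are nodup and contained in C.edges
    have hnodup : w.edges.Nodup := hw.edges_nodup
    have hsub : w.edges ⊆ C.edges := fun e he =>
      (hedge e).mp (w.edges_subset_edgeSet he)
    have hle : w.edges.length ≤ C.edges.length := by
      calc w.edges.length = w.edges.toFinset.card :=
            (List.toFinset_card_of_nodup hnodup).symm
        _ ≤ C.edges.toFinset.card := by
            apply Finset.card_le_card
            intro e he
            rw [List.mem_toFinset] at he ⊢
            exact hsub he
        _ ≤ C.edges.length := List.toFinset_card_le _
    rw [length_edges, length_edges] at hle
    omega
  -- transfer P and W into G'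
  have hPe : ∀ e ∈ P.edges, e ∈ G'.edgeSet := by
    intro e he
    rw [hedge, hCedges]
    exact List.mem_append_left _ he
  have hWe : ∀ e ∈ W.edges, e ∈ G'.edgeSet := by
    intro e he
    rw [hedge, hCedges]
    refine List.mem_append_right _ ?_
    simpa using he
  set P' := P.transfer G' hPe with hP'def
  set W' := W.transfer G' hWe with hW'def
  have hP'path : P'.IsPath := hP.transfer hPe
  have huniq := SimpleGraph.isAcyclic_iff_path_unique.mp hacyc
    (⟨P', hP'path⟩ : G'.Path u v) W'.toPath
  intro x hx
  have hx' : x ∈ P'.support := by rwa [support_transfer]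
  have heq : P' = W'.bypass := by
    simpa [Walk.toPath] using congrArg Subtype.val huniq
  have : x ∈ W'.bypass.support := by rwa [heq] at hx'
  have : x ∈ W'.support := W'.support_bypass_subset this
  rwa [support_transfer] at this

lemma on_shortest_of_mem_support {V : Type*} {G : SimpleGraph V} (hconn : G.Connected)
    {u v x : V} (Q : G.Walk u v) (hQ : Q.length = G.dist u v) (hx : x ∈ Q.support) :
    G.dist u x + G.dist x v = G.dist u v := by
  classical
  have hspec := Q.take_spec hx
  have hlen : (Q.takeUntil x hx).length + (Q.dropUntil x hx).length = Q.length := by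
    rw [← length_append, hspec]
  have h1 : G.dist u x ≤ (Q.takeUntil x hx).length := dist_le _
  have h2 : G.dist x v ≤ (Q.dropUntil x hx).length := dist_le _
  have htri : G.dist u v ≤ G.dist u x + G.dist x v := hconn.dist_triangle
  omega

/-- If `G` has girth greater than `g` and `t₁, t₂, t₃` are vertices with
`dist(t₁,t₂) + dist(t₂,t₃) + dist(t₁,t₃) < g`, then every vertex `p` lying on a shortest
path between `t₁` and `t₂` (i.e. `dist(t₁,p) + dist(p,t₂) = dist(t₁,t₂)`) lies on a shortest
path between `t₁` and `t₃` or on a shortest path between `t₂` and `t₃`. -/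
theorem stmt_4 {V : Type*} (G : SimpleGraph V) (hconn : G.Connected)
    (g : ℕ) (hg : (g : ℕ∞) < G.girth) (t₁ t₂ t₃ : V)
    (hsum : G.dist t₁ t₂ + G.dist t₂ t₃ + G.dist t₁ t₃ < g)
    (p : V) (hp : G.dist t₁ p + G.dist p t₂ = G.dist t₁ t₂) :
    G.dist t₁ p + G.dist p t₃ = G.dist t₁ t₃ ∨
      G.dist t₂ p + G.dist p t₃ = G.dist t₂ t₃ := by
  classical
  -- extract the girth fact: every cycle is longer than g
  have hG : ∀ (a : V) (w : G.Walk a a), w.IsCycle → g < w.length := by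
    intro a w hw
    have h1 : (G.girth : ℕ∞) ≤ G.egirth := by
      rcases eq_or_ne G.egirth ⊤ with h | h
      · simp [h]
      · rw [SimpleGraph.girth, ENat.coe_toNat h]
    have h2 : G.egirth ≤ w.length := SimpleGraph.le_egirth.mp le_rfl a w hw
    have hglt : (g : ℕ∞) < (w.length : ℕ∞) := lt_of_lt_of_le hg (le_trans h1 h2)
    exact_mod_cast hglt
  obtain ⟨Q1, hQ1⟩ := hconn.exists_walk_length_eq_dist t₁ p
  obtain ⟨Q2, hQ2⟩ := hconn.exists_walk_length_eq_dist p t₂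
  obtain ⟨Q3, hQ3⟩ := hconn.exists_walk_length_eq_dist t₁ t₃
  obtain ⟨Q4, hQ4⟩ := hconn.exists_walk_length_eq_dist t₃ t₂
  set P : G.Walk t₁ t₂ := Q1.append Q2 with hPdef
  have hPlen : P.length = G.dist t₁ t₂ := by
    rw [hPdef, length_append, hQ1, hQ2, hp]
  have hPpath : P.IsPath := P.isPath_of_length_eq_dist hPlen
  set W : G.Walk t₁ t₂ := Q3.append Q4 with hWdef
  have hWlen : W.length = G.dist t₁ t₃ + G.dist t₃ t₂ := by
    rw [hWdef, length_append, hQ3, hQ4]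
  have hlt : P.length + W.length < g := by
    have hc : G.dist t₃ t₂ = G.dist t₂ t₃ := dist_comm
    omega
  have hpP : p ∈ P.support := by
    rw [hPdef, mem_support_append_iff]
    exact Or.inl (end_mem_support Q1)
  have hpW : p ∈ W.support := key_lemma hG P W hPpath hlt p hpP
  rw [hWdef, mem_support_append_iff] at hpW
  rcases hpW with h | h
  · exact Or.inl (on_shortest_of_mem_support hconn Q3 hQ3 h)
  · right
    have := on_shortest_of_mem_support hconn Q4 hQ4 h
    have h1 : G.dist t₃ t₂ = G.dist t₂ t₃ := (dist_comm : G.dist t₃ t₂ = _)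
    have h2 : G.dist t₃ p = G.dist p t₃ := (dist_comm : G.dist t₃ p = _)
    have h3 : G.dist p t₂ = G.dist t₂ p := (dist_comm : G.dist p t₂ = _)
    omega
end

section
/- Let (X,δ) be a finite semi-metric space with a distinguished subset T, and for x ∈ X define ν(x) = min over pairs t,t' ∈ T of (δ(x,t) + δ(x,t') − δ(t,t')/2)/2. If t₁,t₂ ∈ T attain this minimum for x, then δ(x,t₁) + δ(x,t₂) ≤ 4 · min_{t∈T} δ(x,t). -/
open Finset

/-- Let `δ` be a semi-metric on a finite set `X`, `T ⊆ X` nonempty, and for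
`x ∈ X` set `ν(x) = min_{t,t' ∈ T} (δ(x,t) + δ(x,t') − δ(t,t')/2)/2` (note: only half of
`δ(t,t')` is subtracted). If `t₁, t₂ ∈ T` attain this minimum, then
`δ(x,t₁) + δ(x,t₂) ≤ 4 · min_{t ∈ T} δ(x,t)`. -/
theorem stmt_7 {X : Type*} [Fintype X] (δ : X → X → ℝ)
    (hnonneg : ∀ a b, 0 ≤ δ a b) (hsymm : ∀ a b, δ a b = δ b a)
    (hself : ∀ a, δ a a = 0) (htri : ∀ a b c, δ a c ≤ δ a b + δ b c)
    (T : Finset X) (hT : T.Nonempty) (x : X)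
    (t₁ t₂ : X) (ht₁ : t₁ ∈ T) (ht₂ : t₂ ∈ T)
    (hmin : ∀ t ∈ T, ∀ t' ∈ T,
      (δ x t₁ + δ x t₂ - δ t₁ t₂ / 2) / 2 ≤ (δ x t + δ x t' - δ t t' / 2) / 2) :
    δ x t₁ + δ x t₂ ≤ 4 * T.inf' hT (fun t => δ x t) := by
  obtain ⟨t₀, ht₀, heq⟩ := T.exists_mem_eq_inf' hT (fun t => δ x t)
  have h1 := hmin t₀ ht₀ t₀ ht₀
  have h2 := htri t₁ x t₂
  have h3 := hsymm t₁ x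
  have h4 := hself t₀
  rw [heq]
  linarith
end

section
/- Let G' be the graph on n vertices formed as the union of the edge sets of three independent uniformly random permutations σ₁, σ₂, σ₃ of the vertex set (with edge (v, σ_i(v)) for each v and i). Then the expected number of cycles in G' of length at most (log n)/100 is at most n^{0.1} for all sufficiently large n. -/
open Finset

/-- The union graph of three permutations: `u ~ w` iff some `σᵢ` maps one of them to
the other. -/
def permGraph {V : Type*} [DecidableEq V] (σ₁ σ₂ σ₃ : Equiv.Perm V) : SimpleGraph V where
  Adj u w := u ≠ w ∧ (σ₁ u = w ∨ σ₁ w = u ∨ σ₂ u = w ∨ σ₂ w = u ∨ σ₃ u = w ∨ σ₃ w = u)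
  symm := by constructor; intro u w h; exact ⟨h.1.symm, by tauto⟩
  loopless := by constructor; intro u h; exact h.1 rfl

/-- The number of cycles of a graph `G` of length at most `K` (a cycle is identified with
the subgraph it traces out). -/
noncomputable def shortCycleCount {V : Type*} (G : SimpleGraph V) (K : ℝ) : ℕ :=
  {H : G.Subgraph | ∃ (v : V) (w : G.Walk v v),
      w.IsCycle ∧ (w.length : ℝ) ≤ K ∧ w.toSubgraph = H}.ncard

/-!
A cycle of length `L` is encoded injectively by the tuple of its vertices `v : Fin L → V`.
For a fixed injective tuple, every edge `v i ~ v (i + 1)` must be produced by one of the `r`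
permutations in one of the two directions. Each of the `(2r)^L` such assignments prescribes the
`r`-th permutation on `k_r` distinct points, which `(n - k_r)!` permutations satisfy, and
`n^k (n - k)! ≤ 2^k n!` while `2k ≤ n`. Summing over the at most `n^L` tuples, the expected
number of `L`-cycles is at most `(4r)^L`, so the expected number of cycles of length at most
`M = ⌊log₂ n / 100⌋` is below `12^(M+1) ≤ n^0.1` when `r = 3` and `n ≥ 2^100`.
-/

open Equiv
open scoped Nat

theorem Nat.pow_mul_factorial_sub_le {n k : ℕ} (h : 2 * k ≤ n) :
    n ^ k * (n - k)! ≤ 2 ^ k * n ! := by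
  have hdesc : n ^ k ≤ 2 ^ k * n.descFactorial k :=
    calc n ^ k ≤ (2 * (n + 1 - k)) ^ k := Nat.pow_le_pow_left (by omega) k
      _ ≤ 2 ^ k * n.descFactorial k := by
        rw [Nat.mul_pow]; exact Nat.mul_le_mul_left _ (Nat.pow_sub_le_descFactorial n k)
  calc n ^ k * (n - k)! ≤ 2 ^ k * (n.descFactorial k * (n - k)!) := by
        rw [← mul_assoc]; exact Nat.mul_le_mul_right _ hdesc
    _ = 2 ^ k * n ! := by
        rw [mul_comm (Nat.descFactorial _ _), Nat.factorial_mul_descFactorial (by omega)]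

section PermCounting

variable {V : Type*} [Fintype V] [DecidableEq V]

theorem card_perm_fixing (A : Finset V) :
    #{σ : Perm V | ∀ a ∈ A, σ a = a} = (Fintype.card V - #A)! := by
  have e : {σ : Perm V // ∀ a ∈ A, σ a = a} ≃ Perm {a // a ∉ A} :=
    (Equiv.subtypeEquivRight fun σ => by simp only [not_not]).trans
      (Perm.subtypeEquivSubtypePerm (· ∉ A)).symm
  rw [← Fintype.card_subtype, Fintype.card_congr e, Fintype.card_perm,
    Fintype.card_subtype_compl, Fintype.card_coe]

theorem card_perm_apply_eq_le (P : Finset (V × V)) :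
    #{σ : Perm V | ∀ p ∈ P, σ p.1 = p.2} ≤ (Fintype.card V - #P)! := by
  obtain hP | ⟨σ₀, hσ₀⟩ := Finset.eq_empty_or_nonempty {σ : Perm V | ∀ p ∈ P, σ p.1 = p.2}
  · rw [hP, card_empty]; exact Nat.zero_le _
  simp only [mem_filter, mem_univ, true_and] at hσ₀
  have hfst : Set.InjOn Prod.fst (P : Set (V × V)) := fun p hp q hq hpq =>
    Prod.ext hpq (by rw [← hσ₀ p hp, ← hσ₀ q hq, hpq])
  -- `σ ↦ σ₀⁻¹ * σ` sends the solutions injectively to permutations fixing every `p.1`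
  rw [← Finset.card_image_of_injOn hfst, ← card_perm_fixing]
  refine card_le_card_of_injOn (σ₀⁻¹ * ·) (fun σ hσ => ?_) fun σ _ τ _ h => mul_left_cancel h
  simp only [coe_filter, mem_univ, true_and, Set.mem_ofPred_eq, mem_image] at hσ ⊢
  rintro _ ⟨p, hp, rfl⟩
  rw [Perm.mul_apply, hσ p hp, ← hσ₀ p hp]
  exact σ₀.symm_apply_apply _

theorem pow_mul_card_pi_perm_apply_eq_le {R : Type*} [Fintype R] [DecidableEq R]
    (P : R → Finset (V × V)) (hP : ∀ r, 2 * #(P r) ≤ Fintype.card V) :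
    Fintype.card V ^ (∑ r, #(P r)) * #{τ : R → Perm V | ∀ r, ∀ p ∈ P r, τ r p.1 = p.2}
      ≤ 2 ^ (∑ r, #(P r)) * (Fintype.card V)! ^ Fintype.card R := by
  have hpi : ({τ : R → Perm V | ∀ r, ∀ p ∈ P r, τ r p.1 = p.2} : Finset _)
      = Fintype.piFinset fun r => {σ : Perm V | ∀ p ∈ P r, σ p.1 = p.2} := by
    ext τ; simp [Fintype.mem_piFinset]
  have hconst : (Fintype.card V)! ^ Fintype.card R = ∏ _r : R, (Fintype.card V)! := by simp
  rw [hpi, Fintype.card_piFinset, ← prod_pow_eq_pow_sum, ← prod_pow_eq_pow_sum, hconst,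
    ← prod_mul_distrib, ← prod_mul_distrib]
  refine prod_le_prod' fun r _ => ?_
  calc _ ≤ Fintype.card V ^ #(P r) * (Fintype.card V - #(P r))! :=
        Nat.mul_le_mul_left _ (card_perm_apply_eq_le _)
    _ ≤ _ := Nat.pow_mul_factorial_sub_le (hP r)

end PermCounting

theorem val_finRotate {L : ℕ} (i : Fin L) :
    (finRotate L i : ℕ) = if (i : ℕ) + 1 = L then 0 else (i : ℕ) + 1 := by
  cases L with
  | zero => exact i.elim0
  | succ m => rw [coe_finRotate]; simp [Fin.ext_iff]

theorem finRotate_finRotate_ne {L : ℕ} (hL : 3 ≤ L) (i : Fin L) :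
    finRotate L (finRotate L i) ≠ i := by
  rw [Ne, Fin.ext_iff, val_finRotate, val_finRotate]
  have := i.2
  split_ifs <;> omega

namespace SimpleGraph

theorem Walk.sigma_eq_of_getVert_eq {V : Type*} {G : SimpleGraph V} {u u' : V}
    (w : G.Walk u u) (w' : G.Walk u' u') (hpos : 0 < w.length) (hlen : w.length = w'.length)
    (h : ∀ i < w.length, w.getVert i = w'.getVert i) :
    (⟨u, w⟩ : Σ u, G.Walk u u) = ⟨u', w'⟩ := by
  obtain rfl : u = u' := by simpa using h 0 hpos
  have hall : ∀ i ≤ w.length, w.getVert i = w'.getVert i := fun i hi => by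
    rcases hi.lt_or_eq with hi | rfl
    · exact h i hi
    · rw [w.getVert_length, hlen, w'.getVert_length]
  refine Sigma.ext rfl (heq_of_eq (Walk.ext_support (List.ext_getElem (by simp [hlen]) ?_)))
  intro i hi hi'
  rw [Walk.support_getElem_eq_getVert, Walk.support_getElem_eq_getVert]
  exact hall i (by simpa using hi)

variable {V : Type*} [Fintype V] [DecidableEq V]

def cycleTuples (G : SimpleGraph V) [DecidableRel G.Adj] (L : ℕ) : Finset (Fin L → V) :=
  {v | Function.Injective v ∧ ∀ i, G.Adj (v i) (v (finRotate L i))}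

variable {G : SimpleGraph V} [DecidableRel G.Adj]

theorem Walk.IsCycle.getVert_mem_cycleTuples {u : V} {w : G.Walk u u} (hw : w.IsCycle) :
    (fun i : Fin w.length => w.getVert i) ∈ G.cycleTuples w.length := by
  have h3 := hw.three_le_length
  simp only [cycleTuples, mem_filter, mem_univ, true_and]
  refine ⟨fun i j hij => Fin.ext (hw.getVert_injOn' (by simp; omega) (by simp; omega) hij),
    fun i => ?_⟩
  have hsucc := w.adj_getVert_succ i.2
  rw [val_finRotate]
  split_ifs with hi
  · rw [Walk.getVert_zero]; rwa [hi, w.getVert_length] at hsucc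
  · exact hsucc

variable (G) in
theorem shortCycleCount_le_sum_card_cycleTuples (K : ℝ) :
    shortCycleCount G K ≤ ∑ L ∈ Icc 3 ⌊K⌋₊, #(G.cycleTuples L) := by
  set C : Set (Σ u, G.Walk u u) := {x | x.2.IsCycle ∧ (x.2.length : ℝ) ≤ K}
  let enc : (Σ u, G.Walk u u) → Σ L, (Fin L → V) :=
    fun x => ⟨x.2.length, fun i => x.2.getVert i⟩
  have hcycles : {H : G.Subgraph | ∃ (v : V) (w : G.Walk v v),
      w.IsCycle ∧ (w.length : ℝ) ≤ K ∧ w.toSubgraph = H} = (fun x => x.2.toSubgraph) '' C := by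
    ext H; simp [C, and_assoc]
  have henc : Set.InjOn enc C := by
    rintro ⟨u, w⟩ hw ⟨u', w'⟩ - h
    simp only [enc, Sigma.mk.inj_iff] at h
    obtain ⟨hlen, hvert⟩ := h
    refine Walk.sigma_eq_of_getVert_eq w w' (lt_of_lt_of_le (by norm_num) hw.1.three_le_length)
      hlen fun i hi => ?_
    simpa using (Fin.heq_fun_iff hlen).mp hvert ⟨i, hi⟩
  have himg : enc '' C ⊆ ((Icc 3 ⌊K⌋₊).sigma G.cycleTuples : Set _) := by
    rintro _ ⟨⟨u, w⟩, ⟨hw, hK⟩, rfl⟩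
    simp only [coe_sigma, Set.mem_sigma_iff, coe_Icc, Set.mem_Icc, mem_coe]
    exact ⟨⟨hw.three_le_length, Nat.le_floor hK⟩, hw.getVert_mem_cycleTuples⟩
  have hfin : C.Finite := Set.Finite.of_finite_image ((finite_toSet _).subset himg) henc
  calc shortCycleCount G K = ((fun x => x.2.toSubgraph) '' C).ncard := by
        rw [shortCycleCount, hcycles]
    _ ≤ C.ncard := Set.ncard_image_le hfin
    _ = (enc '' C).ncard := henc.ncard_image.symm
    _ ≤ #((Icc 3 ⌊K⌋₊).sigma G.cycleTuples) := by
        rw [← Set.ncard_coe_finset]; exact Set.ncard_le_ncard himg (finite_toSet _)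
    _ = ∑ L ∈ Icc 3 ⌊K⌋₊, #(G.cycleTuples L) := card_sigma _ _

end SimpleGraph

open SimpleGraph

def permUnionGraph {R V : Type*} (τ : R → Perm V) : SimpleGraph V :=
  fromRel fun u w => ∃ r, τ r u = w

instance {R V : Type*} [Fintype R] [DecidableEq V] (τ : R → Perm V) :
    DecidableRel (permUnionGraph τ).Adj := fun u w =>
  decidable_of_iff (u ≠ w ∧ ((∃ r, τ r u = w) ∨ ∃ r, τ r w = u)) (by simp [permUnionGraph])

theorem permGraph_eq_permUnionGraph {V : Type*} [DecidableEq V] (σ₁ σ₂ σ₃ : Perm V) :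
    permGraph σ₁ σ₂ σ₃ = permUnionGraph ![σ₁, σ₂, σ₃] := by
  ext u w
  simp only [permGraph, permUnionGraph, fromRel_adj, Fin.exists_fin_succ, Fin.exists_fin_zero,
    Matrix.cons_val_zero, Fin.succ_zero_eq_one, Matrix.cons_val_one, Fin.succ_one_eq_two,
    Matrix.cons_val, or_false]
  tauto

/-- The constraint `σ a = b` under which a permutation `σ` produces the edge
`{v i, v (i + 1)}`, in the direction given by `e.2`. -/
def orientedEdge {V : Type*} {L : ℕ} (v : Fin L → V) (e : Fin L × Bool) : V × V :=
  bif e.2 then (v e.1, v (finRotate L e.1)) else (v (finRotate L e.1), v e.1)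

theorem orientedEdge_injective {V : Type*} {L : ℕ} (hL : 3 ≤ L) {v : Fin L → V}
    (hv : Function.Injective v) : Function.Injective (orientedEdge v) := by
  rintro ⟨i, b⟩ ⟨j, c⟩ h
  cases b <;> cases c <;> simp only [orientedEdge, cond_true, cond_false, Prod.mk.injEq] at h
  · rw [hv h.2]
  · exact absurd (by rw [← hv h.2, hv h.1]) (finRotate_finRotate_ne hL j)
  · exact absurd (by rw [← hv h.1, hv h.2]) (finRotate_finRotate_ne hL j)
  · rw [hv h.1]

section PermUnionGraph

variable {R V : Type*} [Fintype R] [DecidableEq R] [Fintype V] [DecidableEq V]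

theorem pow_mul_card_mem_cycleTuples_permUnionGraph_le {L : ℕ} (hL : 3 ≤ L)
    (hn : 2 * L ≤ Fintype.card V) (v : Fin L → V) :
    Fintype.card V ^ L * #{τ : R → Perm V | v ∈ (permUnionGraph τ).cycleTuples L}
      ≤ (4 * Fintype.card R) ^ L * (Fintype.card V)! ^ Fintype.card R := by
  by_cases hv : Function.Injective v
  swap
  · simp [cycleTuples, hv]
  -- union bound over the ways to assign to each edge a permutation and a direction producing it
  let P : (Fin L → R × Bool) → R → Finset (V × V) := fun f r =>
    ({i | (f i).1 = r} : Finset _).image fun i => orientedEdge v (i, (f i).2)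
  have hcover : ({τ : R → Perm V | v ∈ (permUnionGraph τ).cycleTuples L} : Finset _)
      ⊆ univ.biUnion fun f => {τ | ∀ r, ∀ p ∈ P f r, τ r p.1 = p.2} := by
    intro τ hτ
    simp only [cycleTuples, mem_filter, mem_univ, true_and] at hτ
    have : ∀ i, ∃ e : R × Bool,
        τ e.1 (orientedEdge v (i, e.2)).1 = (orientedEdge v (i, e.2)).2 := by
      intro i
      obtain ⟨-, ⟨r, h⟩ | ⟨r, h⟩⟩ := hτ.2 i
      exacts [⟨(r, true), h⟩, ⟨(r, false), h⟩]
    choose f hf using this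
    simp only [mem_biUnion, mem_univ, true_and, mem_filter]
    refine ⟨f, fun r p hp => ?_⟩
    obtain ⟨i, hi, rfl⟩ := mem_image.mp hp
    rw [(mem_filter.mp hi).2.symm]
    exact hf i
  have hcardP : ∀ f r, #(P f r) = #{i | (f i).1 = r} := fun f r =>
    card_image_of_injective _ <|
      (orientedEdge_injective hL hv).comp fun i j h => (Prod.mk.inj h).1
  have hsumP : ∀ f, ∑ r, #(P f r) = L := fun f => by
    simp_rw [hcardP]
    rw [← card_eq_sum_card_fiberwise (fun _ _ => mem_univ _), Finset.card_univ,
      Fintype.card_fin]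
  have hP : ∀ f r, 2 * #(P f r) ≤ Fintype.card V := fun f r => by
    have := card_filter_le (univ : Finset (Fin L)) fun i => (f i).1 = r
    rw [Finset.card_univ, Fintype.card_fin] at this
    rw [hcardP]; omega
  calc Fintype.card V ^ L * #{τ : R → Perm V | v ∈ (permUnionGraph τ).cycleTuples L}
      ≤ Fintype.card V ^ L * ∑ f, #{τ : R → Perm V | ∀ r, ∀ p ∈ P f r, τ r p.1 = p.2} :=
        Nat.mul_le_mul_left _ ((card_le_card hcover).trans card_biUnion_le)
    _ = ∑ f, Fintype.card V ^ (∑ r, #(P f r)) *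
          #{τ : R → Perm V | ∀ r, ∀ p ∈ P f r, τ r p.1 = p.2} := by
        rw [mul_sum]; simp_rw [hsumP]
    _ ≤ ∑ f : Fin L → R × Bool, 2 ^ L * (Fintype.card V)! ^ Fintype.card R :=
        sum_le_sum fun f _ => hsumP f ▸ pow_mul_card_pi_perm_apply_eq_le (P f) (hP f)
    _ = (4 * Fintype.card R) ^ L * (Fintype.card V)! ^ Fintype.card R := by
        simp only [sum_const, Finset.card_univ, Fintype.card_fun, Fintype.card_prod,
          Fintype.card_bool, Fintype.card_fin, smul_eq_mul, mul_pow, (by norm_num : 4 = 2 * 2)]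
        ring

theorem sum_card_cycleTuples_permUnionGraph_le {L : ℕ} (hL : 3 ≤ L)
    (hn : 2 * L ≤ Fintype.card V) :
    ∑ τ : R → Perm V, #((permUnionGraph τ).cycleTuples L)
      ≤ (4 * Fintype.card R) ^ L * (Fintype.card V)! ^ Fintype.card R := by
  have hswap : ∑ τ : R → Perm V, #((permUnionGraph τ).cycleTuples L)
      = ∑ v : Fin L → V, #{τ : R → Perm V | v ∈ (permUnionGraph τ).cycleTuples L} := by
    simpa [bipartiteAbove, bipartiteBelow] using
      sum_card_bipartiteAbove_eq_sum_card_bipartiteBelow (s := univ) (t := univ)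
        fun (τ : R → Perm V) (v : Fin L → V) => v ∈ (permUnionGraph τ).cycleTuples L
  refine Nat.le_of_mul_le_mul_left ?_ (pow_pos (by omega : 0 < Fintype.card V) L)
  calc Fintype.card V ^ L * ∑ τ : R → Perm V, #((permUnionGraph τ).cycleTuples L)
      ≤ ∑ _v : Fin L → V, (4 * Fintype.card R) ^ L * (Fintype.card V)! ^ Fintype.card R := by
        rw [hswap, mul_sum]
        exact sum_le_sum fun v _ => pow_mul_card_mem_cycleTuples_permUnionGraph_le hL hn v
    _ = _ := by simp

theorem sum_shortCycleCount_permUnionGraph_le [Nonempty R] {K : ℝ}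
    (hK : 2 * ⌊K⌋₊ ≤ Fintype.card V) :
    ∑ τ : R → Perm V, shortCycleCount (permUnionGraph τ) K
      ≤ (4 * Fintype.card R) ^ (⌊K⌋₊ + 1) * (Fintype.card V)! ^ Fintype.card R := by
  have hR := Fintype.card_pos (α := R)
  calc ∑ τ : R → Perm V, shortCycleCount (permUnionGraph τ) K
      ≤ ∑ τ : R → Perm V, ∑ L ∈ Icc 3 ⌊K⌋₊, #((permUnionGraph τ).cycleTuples L) :=
        sum_le_sum fun τ _ => shortCycleCount_le_sum_card_cycleTuples _ K
    _ = ∑ L ∈ Icc 3 ⌊K⌋₊, ∑ τ : R → Perm V, #((permUnionGraph τ).cycleTuples L) := sum_comm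
    _ ≤ ∑ L ∈ Icc 3 ⌊K⌋₊, (4 * Fintype.card R) ^ L * (Fintype.card V)! ^ Fintype.card R :=
        sum_le_sum fun L hL => by
          rw [mem_Icc] at hL
          exact sum_card_cycleTuples_permUnionGraph_le hL.1 (by omega)
    _ = (∑ L ∈ Icc 3 ⌊K⌋₊, (4 * Fintype.card R) ^ L) * (Fintype.card V)! ^ Fintype.card R :=
        (sum_mul ..).symm
    _ ≤ (4 * Fintype.card R) ^ (⌊K⌋₊ + 1) * (Fintype.card V)! ^ Fintype.card R := by
        refine Nat.mul_le_mul_right _ (Nat.geomSum_lt (by omega) fun L hL => ?_).le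
        rw [mem_Icc] at hL; omega

end PermUnionGraph

theorem sum_triple_eq_sum_fin_three {α M : Type*} [Fintype α] [AddCommMonoid M]
    (f : (Fin 3 → α) → M) : ∑ σ : α × α × α, f ![σ.1, σ.2.1, σ.2.2] = ∑ τ, f τ :=
  Fintype.sum_equiv ((Equiv.prodCongr (Equiv.refl _) (piFinTwoEquiv fun _ => α).symm).trans
    (Fin.consEquiv fun _ => α)) _ _ fun _ => rfl

theorem two_mul_floor_logb_div_le (n : ℕ) : 2 * ⌊Real.logb 2 n / 100⌋₊ ≤ n := by
  have hlog2 : (1 / 2 : ℝ) < Real.log 2 := by linarith [Real.log_two_gt_d9]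
  have hlogb : Real.logb 2 n ≤ 2 * n := by
    rw [Real.logb, div_le_iff₀ (by linarith)]
    nlinarith [Real.log_le_self (Nat.cast_nonneg n : (0 : ℝ) ≤ n), Real.log_natCast_nonneg n]
  have : ⌊Real.logb 2 n / 100⌋₊ ≤ ⌊(n : ℝ) / 50⌋₊ := Nat.floor_le_floor (by linarith)
  rw [Nat.floor_div_ofNat (n : ℝ), Nat.floor_natCast] at this
  omega

theorem twelve_pow_floor_logb_div_le {x : ℝ} (hx : 2 ^ 100 ≤ x) :
    (12 : ℝ) ^ (⌊Real.logb 2 x / 100⌋₊ + 1) ≤ x ^ (0.1 : ℝ) := by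
  have hxpos : 0 < x := lt_of_lt_of_le (by positivity) hx
  have ht : 100 ≤ Real.logb 2 x := by
    rw [Real.le_logb_iff_rpow_le (by norm_num) hxpos]; exact_mod_cast hx
  have hM := Nat.floor_le (a := Real.logb 2 x / 100) (by positivity)
  calc (12 : ℝ) ^ (⌊Real.logb 2 x / 100⌋₊ + 1) ≤ 16 ^ (⌊Real.logb 2 x / 100⌋₊ + 1) :=
        pow_le_pow_left₀ (by norm_num) (by norm_num) _
    _ = (2 : ℝ) ^ ((4 * (⌊Real.logb 2 x / 100⌋₊ + 1) : ℕ) : ℝ) := by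
        rw [Real.rpow_natCast, pow_mul]; norm_num
    _ ≤ 2 ^ (Real.logb 2 x * 0.1) :=
        Real.rpow_le_rpow_of_exponent_le (by norm_num) (by push_cast; linarith)
    _ = x ^ (0.1 : ℝ) := by
        rw [Real.rpow_mul (by norm_num), Real.rpow_logb (by norm_num) (by norm_num) hxpos]

/-- Let `G'` be the union of the edge sets of three independent uniformly
random permutations of an `n`-element vertex set. Then, for all sufficiently large `n`, the
expected number of cycles of `G'` of length at most `(log n)/100` is at most `n^{0.1}`. -/
theorem stmt_9 :
    ∃ N : ℕ, ∀ (V : Type) [Fintype V] [DecidableEq V], N ≤ Fintype.card V →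
      (∑ σ : Equiv.Perm V × Equiv.Perm V × Equiv.Perm V,
          (shortCycleCount (permGraph σ.1 σ.2.1 σ.2.2)
            (Real.logb 2 (Fintype.card V) / 100) : ℝ))
          / (Fintype.card (Equiv.Perm V × Equiv.Perm V × Equiv.Perm V) : ℝ)
        ≤ (Fintype.card V : ℝ) ^ (0.1 : ℝ) := by
  refine ⟨2 ^ 100, fun V _ _ hN => ?_⟩
  set n := Fintype.card V
  set K := Real.logb 2 n / 100
  have hcount : ∑ σ : Perm V × Perm V × Perm V, shortCycleCount (permGraph σ.1 σ.2.1 σ.2.2) K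
      ≤ 12 ^ (⌊K⌋₊ + 1) * n ! ^ 3 := by
    simp_rw [permGraph_eq_permUnionGraph]
    rw [sum_triple_eq_sum_fin_three fun τ => shortCycleCount (permUnionGraph τ) K]
    simpa using sum_shortCycleCount_permUnionGraph_le (R := Fin 3) (two_mul_floor_logb_div_le n)
  have hcard : (Fintype.card (Perm V × Perm V × Perm V) : ℝ) = (n ! : ℝ) ^ 3 := by
    simp only [Fintype.card_prod, Fintype.card_perm]; push_cast; ring
  rw [div_le_iff₀ (by positivity), hcard]
  calc (∑ σ : Perm V × Perm V × Perm V, (shortCycleCount (permGraph σ.1 σ.2.1 σ.2.2) K : ℝ))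
      ≤ 12 ^ (⌊K⌋₊ + 1) * (n ! : ℝ) ^ 3 := by exact_mod_cast hcount
    _ ≤ (n : ℝ) ^ (0.1 : ℝ) * (n ! : ℝ) ^ 3 := by
        gcongr
        exact twelve_pow_floor_logb_div_le (by exact_mod_cast hN)
end

section
/- Let C = (v₁, v₂, …, v_n, v₁) be a Hamiltonian cycle on a vertex set V of size n. Fix a partition of V into L labeled clusters and a symmetric 'friendship' relation on the clusters in which each cluster is related to at most s others. If the number of cycle edges (v_i, v_{i+1}) whose endpoints lie in non-friend, distinct clusters is at most m, then the number of possible labeled partitions realizing a fixed set of at most m unfriendly edges is at most L · (s+1)^n · L^m. -/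
/-!
Read the cycle as the path `v₀, v₁, …, vₙ₋₁` and forget its closing edge. A labelling of the
path is fixed by the cluster of `v₀` and, for each later vertex, by its cluster given that of
its predecessor: at most `s + 1` choices (the same cluster or a friend) across a friendly edge,
at most `L` across one of the prescribed unfriendly edges.
-/

open Finset

theorem card_filter_forall_succ_mem_le {α : Type*} [Fintype α] [DecidableEq α] :
    ∀ (n : ℕ) (A : Fin n → α → Finset α) (b : Fin n → ℕ), (∀ i a, (A i a).card ≤ b i) →
      (univ.filter fun f : Fin (n + 1) → α => ∀ i, f i.succ ∈ A i (f i.castSucc)).card ≤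
        Fintype.card α * ∏ i, b i
  | 0, A, b, _ => by simp
  | n + 1, A, b, hA => by
    set T := univ.filter fun f : Fin (n + 2) → α => ∀ i, f i.succ ∈ A i (f i.castSucc)
    have hfiber : ∀ g ∈ T.image Fin.init,
        (T.filter fun f => Fin.init f = g).card ≤ b (Fin.last n) := by
      intro g _
      refine le_trans (card_le_card_of_injOn (fun f => f (Fin.last (n + 1)))
        (t := A (Fin.last n) (g (Fin.last n))) ?_ ?_) (hA _ _)
      · intro f hf
        simp only [coe_filter, Set.mem_ofPred_eq, T, mem_filter, mem_univ, true_and] at hf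
        rw [← hf.2]
        exact hf.1 (Fin.last n)
      · intro f₁ hf₁ f₂ hf₂ hlast
        simp only [coe_filter, Set.mem_ofPred_eq] at hf₁ hf₂
        rw [← Fin.snoc_init_self f₁, ← Fin.snoc_init_self f₂, hf₁.2, hf₂.2]
        exact congrArg _ hlast
    have himage : T.image Fin.init ⊆ univ.filter fun f : Fin (n + 1) → α =>
        ∀ i : Fin n, f i.succ ∈ A i.castSucc (f i.castSucc) := by
      intro g hg
      obtain ⟨f, hf, rfl⟩ := mem_image.mp hg
      simp only [T, mem_filter, mem_univ, true_and] at hf ⊢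
      exact fun i => hf i.castSucc
    calc T.card ≤ b (Fin.last n) * (T.image Fin.init).card := card_le_mul_card_image T _ hfiber
      _ ≤ b (Fin.last n) * (Fintype.card α * ∏ i : Fin n, b i.castSucc) := by
        gcongr
        exact (card_le_card himage).trans
          (card_filter_forall_succ_mem_le n _ _ fun i a => hA i.castSucc a)
      _ = Fintype.card α * ∏ i, b i := by rw [Fin.prod_univ_castSucc]; ring

theorem prod_ite_castSucc_mem_le {k L t m : ℕ} (U : Finset (Fin (k + 1))) (hL : 0 < L)
    (ht : 0 < t) (hU : U.card ≤ m) :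
    ∏ i : Fin k, (if i.castSucc ∈ U then L else t) ≤ t ^ (k + 1) * L ^ m := by
  rw [prod_ite, prod_const, prod_const, mul_comm]
  have hin : (univ.filter fun i : Fin k => i.castSucc ∈ U).card ≤ m :=
    (card_le_card_of_injOn Fin.castSucc (fun i hi => (mem_filter.mp hi).2)
      (Fin.castSucc_injective k).injOn).trans hU
  have hout : (univ.filter fun i : Fin k => i.castSucc ∉ U).card ≤ k + 1 :=
    (card_filter_le _ _).trans (by simp)
  gcongr

theorem card_filter_eq_or_friend_le {L s : ℕ} (friend : Fin L → Fin L → Prop)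
    [DecidableRel friend]
    (hdeg : ∀ F : Fin L, (Finset.univ.filter (fun F' => F' ≠ F ∧ friend F F')).card ≤ s)
    (F : Fin L) : (univ.filter fun F' => F = F' ∨ friend F F').card ≤ s + 1 := by
  refine (card_le_card fun F' hF' => ?_).trans
    ((card_insert_le F _).trans (Nat.succ_le_succ (hdeg F)))
  simp only [mem_filter, mem_univ, true_and, mem_insert] at hF' ⊢
  tauto

theorem stmt_11_general {V : Type*} [Fintype V] [DecidableEq V] (n L s m : ℕ) [NeZero n]
    (v : Fin n → V) (hv : Function.Bijective v)
    (friend : Fin L → Fin L → Prop) [DecidableRel friend]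
    (hdeg : ∀ F : Fin L, (Finset.univ.filter (fun F' => F' ≠ F ∧ friend F F')).card ≤ s)
    (U : Finset (Fin n)) (hU : U.card ≤ m) :
    (Finset.univ.filter (fun c : V → Fin L =>
        Finset.univ.filter (fun i : Fin n =>
          c (v i) ≠ c (v (i + 1)) ∧ ¬ friend (c (v i)) (c (v (i + 1)))) = U)).card
      ≤ L * (s + 1) ^ n * L ^ m := by
  obtain ⟨k, rfl⟩ := Nat.exists_eq_succ_of_ne_zero (NeZero.ne n)
  let A : Fin k → Fin L → Finset (Fin L) := fun i F =>
    if i.castSucc ∈ U then univ else univ.filter fun F' => F = F' ∨ friend F F'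
  have hmaps : ∀ c ∈ univ.filter (fun c : V → Fin L => univ.filter (fun i : Fin (k + 1) =>
      c (v i) ≠ c (v (i + 1)) ∧ ¬ friend (c (v i)) (c (v (i + 1)))) = U),
      ∀ i, (c ∘ v) i.succ ∈ A i ((c ∘ v) i.castSucc) := by
    intro c hc i
    simp only [mem_filter, mem_univ, true_and] at hc
    by_cases hi : i.castSucc ∈ U
    · simp [A, hi]
    · simp only [← hc, mem_filter, mem_univ, true_and, Fin.coeSucc_eq_succ] at hi
      simp only [A, ← hc, mem_filter, mem_univ, true_and, Fin.coeSucc_eq_succ, hi, if_false,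
        Function.comp_apply]
      tauto
  calc _ ≤ (univ.filter fun d : Fin (k + 1) → Fin L => ∀ i, d i.succ ∈ A i (d i.castSucc)).card :=
        card_le_card_of_injOn (· ∘ v) (fun c hc => by simpa using hmaps c hc)
          hv.surjective.injective_comp_right.injOn
    _ ≤ L * ∏ i : Fin k, (if i.castSucc ∈ U then L else s + 1) := by
        simpa using card_filter_forall_succ_mem_le k A _ fun i F => by
          by_cases hi : i.castSucc ∈ U
          · simp [A, hi]
          · simpa [A, hi] using card_filter_eq_or_friend_le friend hdeg F
    _ ≤ L * ((s + 1) ^ (k + 1) * L ^ m) := by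
        rcases L.eq_zero_or_pos with rfl | hL
        · simp
        · exact Nat.mul_le_mul_left _ (prod_ite_castSucc_mem_le U hL s.succ_pos hU)
    _ = L * (s + 1) ^ (k + 1) * L ^ m := by ring

/-- Let `C = (v₁, …, v_n, v₁)` be a Hamiltonian cycle on a vertex set `V`
of size `n`. Fix `L` labeled clusters and a symmetric friendship relation on them in which
each cluster is related to at most `s` others. For any fixed set `U` of at most `m` cycle
edges, the number of labeled partitions (cluster assignments `c : V → Fin L`) whose set of
unfriendly cycle edges is exactly `U` is at most `L · (s+1)^n · L^m`. -/
theorem stmt_11 {V : Type*} [Fintype V] [DecidableEq V] (n L s m : ℕ) [NeZero n]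
    (hcard : Fintype.card V = n)
    (v : Fin n → V) (hv : Function.Bijective v)
    (friend : Fin L → Fin L → Prop) [DecidableRel friend] (hsym : Symmetric friend)
    (hdeg : ∀ F : Fin L, (Finset.univ.filter (fun F' => F' ≠ F ∧ friend F F')).card ≤ s)
    (U : Finset (Fin n)) (hU : U.card ≤ m) :
    (Finset.univ.filter (fun c : V → Fin L =>
        Finset.univ.filter (fun i : Fin n =>
          c (v i) ≠ c (v (i + 1)) ∧ ¬ friend (c (v i)) (c (v (i + 1)))) = U)).card
      ≤ L * (s + 1) ^ n * L ^ m :=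
  stmt_11_general n L s m v hv friend hdeg U hU
end

section
/- Let G be a connected graph with conductance Φ(G) ≥ 1/2 in which every vertex has degree at most 6, let T be a set of k vertices, and let V' ⊆ V with |V'| ≥ 0.1·|V| and k ≤ 0.1·|V|. Then there exist at least k/3 edge-disjoint paths in G, each connecting a distinct vertex of T to a distinct vertex of V'. -/
open Finset

/-
A unit-capacity max-flow/min-cut argument. Put A = T \ V' and B = V' \ T, so |A| ≤ |B|, and link
every vertex of T ∩ V' to itself by a trivial path. Take a maximum integral flow from A to B with
unit edge capacities, of value m. The vertices reachable in the residual graph from the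
unsaturated sources form a set S that contains at least |A| - m vertices, avoids the at least
|B| - m ≥ |A| - m unsaturated sinks, and has all its boundary edges saturated, so
|E(S, Sᶜ)| ≤ m. As G is connected, every degree is positive and volumes dominate cardinalities,
so conductance 1/2 gives (|A| - m)/2 ≤ m, i.e. |A| ≤ 3m. Decomposing the flow into m
edge-disjoint paths finishes the proof.
-/

namespace SimpleGraph

variable {V : Type*} {G : SimpleGraph V} {f : V → V → ℤ}

theorem exists_isPath_of_reflTransGen [DecidableEq V] {r : V → V → Prop}
    (hr : ∀ u v, r u v → G.Adj u v) {u v : V} (h : Relation.ReflTransGen r u v) :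
    ∃ p : G.Walk u v, p.IsPath ∧ ∀ d ∈ p.darts, r d.fst d.snd := by
  suffices ∃ p : G.Walk u v, ∀ d ∈ p.darts, r d.fst d.snd by
    obtain ⟨p, hp⟩ := this
    exact ⟨p.bypass, p.bypass_isPath, fun d hd => hp d (p.darts_bypass_subset_darts hd)⟩
  induction h with
  | refl => exact ⟨.nil, by simp⟩
  | tail _ hbc ih =>
    obtain ⟨p, hp⟩ := ih
    refine ⟨p.concat (hr _ _ hbc), fun d hd => ?_⟩
    rw [Walk.darts_concat, List.concat_eq_append, List.mem_append, List.mem_singleton] at hd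
    rcases hd with hd | rfl
    · exact hp d hd
    · exact hbc

/-- An integral flow with unit capacities on the edges of `G`, in the skew-symmetric encoding:
`f u v` is the net flow from `u` to `v`. -/
structure IsUnitFlow (G : SimpleGraph V) (f : V → V → ℤ) : Prop where
  skew : ∀ u v, f v u = -f u v
  le_one : ∀ u v, f u v ≤ 1
  eq_zero_of_not_adj : ∀ u v, ¬G.Adj u v → f u v = 0

theorem IsUnitFlow.adj_of_pos (hf : G.IsUnitFlow f) {u v : V} (h : 0 < f u v) : G.Adj u v := by
  by_contra hn
  exact h.ne' (hf.eq_zero_of_not_adj u v hn)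

def netOut [Fintype V] (f : V → V → ℤ) (u : V) : ℤ := ∑ v, f u v

section push

variable [DecidableEq V]

def push (f : V → V → ℤ) (u v : V) : V → V → ℤ :=
  fun a b => f a b + (if a = u ∧ b = v then 1 else 0) - (if a = v ∧ b = u then 1 else 0)

theorem push_apply_of_ne {u v a b : V} (h : s(a, b) ≠ s(u, v)) :
    push f u v a b = f a b := by
  rw [Ne, Sym2.eq_iff] at h
  have h' : ¬(a = v ∧ b = u) := fun h' => h (Or.inr h')
  simp only [push, if_neg (fun h' => h (Or.inl h')), if_neg h', add_zero, sub_zero]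

theorem IsUnitFlow.push (hf : G.IsUnitFlow f) {u v : V} (huv : G.Adj u v)
    (hres : f u v ≤ 0) : G.IsUnitFlow (push f u v) where
  skew a b := by
    simp only [SimpleGraph.push, hf.skew a b]
    split_ifs <;> grind
  le_one a b := by
    have := hf.le_one a b
    have := hf.skew u v
    simp only [SimpleGraph.push]
    split_ifs <;> grind
  eq_zero_of_not_adj a b hab := by
    rw [push_apply_of_ne (fun h => hab ?_), hf.eq_zero_of_not_adj a b hab]
    rwa [← G.mem_edgeSet, h]

end push

section flow

variable [Fintype V] [DecidableEq V]

theorem netOut_push (f : V → V → ℤ) {u v : V} (huv : u ≠ v) (a : V) :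
    netOut (push f u v) a = netOut f a + (if a = u then 1 else 0) - (if a = v then 1 else 0) := by
  simp only [netOut, push, Finset.sum_sub_distrib, Finset.sum_add_distrib]
  by_cases hu : a = u <;> by_cases hv : a = v <;> simp_all

theorem IsUnitFlow.exists_augment (hf : G.IsUnitFlow f) {s w : V}
    (p : G.Walk s w) (hp : p.IsPath) (hres : ∀ d ∈ p.darts, f d.fst d.snd ≤ 0) :
    ∃ g, G.IsUnitFlow g ∧
      (∀ u, netOut g u = netOut f u + (if u = s then 1 else 0) - (if u = w then 1 else 0)) ∧
      (∀ d ∈ p.darts, g d.fst d.snd = f d.fst d.snd + 1) ∧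
      ∀ a b, s(a, b) ∉ p.edges → g a b = f a b := by
  induction p generalizing f with
  | nil => exact ⟨f, hf, fun u => by ring, by simp, fun _ _ _ => rfl⟩
  | @cons s x w hsx p ih =>
    rw [Walk.cons_isPath_iff] at hp
    have hs_edges : s(s, x) ∉ p.edges := fun h => hp.2 (p.fst_mem_support_of_mem_edges h)
    have hs_edge : ∀ d ∈ p.darts, d.edge ≠ s(s, x) := fun d hd he =>
      hs_edges (he ▸ List.mem_map_of_mem hd)
    obtain ⟨g, hg, hnet, hdarts, hoff⟩ :=
      ih (hf.push hsx (hres ⟨(s, x), hsx⟩ (by simp))) hp.1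
        (fun d hd => by rw [push_apply_of_ne (hs_edge d hd)]; exact hres d (by simp [hd]))
    refine ⟨g, hg, fun u => ?_, fun d hd => ?_, fun a b hab => ?_⟩
    · rw [hnet, netOut_push f hsx.ne]
      have : x ≠ s := hsx.ne.symm
      split_ifs <;> simp_all
    · rw [Walk.darts_cons, List.mem_cons] at hd
      rcases hd with rfl | hd
      · rw [hoff _ _ hs_edges]
        simp [SimpleGraph.push, hsx.ne]
      · rw [hdarts d hd, push_apply_of_ne (hs_edge d hd)]
    · rw [Walk.edges_cons, List.mem_cons, not_or] at hab
      rw [hoff a b hab.2, push_apply_of_ne hab.1]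

/-- Cancelling the flow along a path of positive arcs is augmenting along its reverse. -/
theorem IsUnitFlow.exists_cancel (hf : G.IsUnitFlow f) {s w : V} (P : G.Walk s w)
    (hP : P.IsPath) (hpos : ∀ d ∈ P.darts, 0 < f d.fst d.snd) :
    ∃ g, G.IsUnitFlow g ∧
      (∀ u, netOut g u = netOut f u + (if u = w then 1 else 0) - (if u = s then 1 else 0)) ∧
      (∀ x y, s(x, y) ∈ P.edges → g x y = 0) ∧
      ∀ x y, s(x, y) ∉ P.edges → g x y = f x y := by
  obtain ⟨g, hg, hnet, hdarts, hoff⟩ := hf.exists_augment P.reverse hP.reverse fun d hd => by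
    rw [Walk.mem_darts_reverse] at hd
    have := hpos _ hd
    rw [hf.skew] at this
    exact (neg_pos.1 this).le
  have hdart : ∀ d ∈ P.darts, g d.snd d.fst = 0 := fun d hd => by
    have h1 := hdarts d.symm (Walk.mem_darts_reverse.2 (by simpa using hd))
    have h2 := hf.le_one d.fst d.snd
    have h3 := hpos d hd
    simp only [Dart.symm_toProd, Prod.fst_swap, Prod.snd_swap, hf.skew d.fst d.snd] at h1
    omega
  refine ⟨g, hg, hnet, fun x y he => ?_, fun x y he => hoff x y (by simpa using he)⟩
  obtain ⟨d, hd, hde⟩ := List.mem_map.1 he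
  obtain ⟨rfl, rfl⟩ | ⟨rfl, rfl⟩ := Sym2.eq_iff.1 hde
  · rw [hg.skew, hdart d hd, neg_zero]
  · exact hdart d hd

theorem sum_netOut_eq_sum_compl (hskew : ∀ u v, f v u = -f u v) (S : Finset V) :
    ∑ u ∈ S, netOut f u = ∑ u ∈ S, ∑ v ∈ Sᶜ, f u v := by
  have hinner : ∑ u ∈ S, ∑ v ∈ S, f u v = 0 := by
    have h : ∑ u ∈ S, ∑ v ∈ S, f u v = -∑ u ∈ S, ∑ v ∈ S, f u v := by
      nth_rw 1 [Finset.sum_comm]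
      simp only [← Finset.sum_neg_distrib]
      exact Finset.sum_congr rfl fun u _ => Finset.sum_congr rfl fun v _ => hskew u v
    linarith
  have hsplit : ∀ u, netOut f u = ∑ v ∈ S, f u v + ∑ v ∈ Sᶜ, f u v := fun u =>
    (Finset.sum_add_sum_compl S (f u)).symm
  rw [Finset.sum_congr rfl fun u _ => hsplit u, Finset.sum_add_distrib, hinner, zero_add]

theorem sum_netOut_univ (hskew : ∀ u v, f v u = -f u v) : ∑ u, netOut f u = 0 := by
  simpa using sum_netOut_eq_sum_compl hskew Finset.univ

theorem exists_reflTransGen_netOut_neg (hskew : ∀ u v, f v u = -f u v) {s : V}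
    (hs : 0 < netOut f s) :
    ∃ w, Relation.ReflTransGen (fun u v => 0 < f u v) s w ∧ netOut f w < 0 := by
  classical
  by_contra! h
  set R := univ.filter (Relation.ReflTransGen (fun u v => 0 < f u v) s)
  have hsR : s ∈ R := by simp [R, Relation.ReflTransGen.refl]
  have hpos : 0 < ∑ u ∈ R, netOut f u :=
    hs.trans_le (Finset.single_le_sum (fun u hu => h u (by simpa [R] using hu)) hsR)
  have hnonpos : ∑ u ∈ R, netOut f u ≤ 0 := by
    rw [sum_netOut_eq_sum_compl hskew]
    refine Finset.sum_nonpos fun u hu => Finset.sum_nonpos fun v hv => ?_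
    by_contra! huv
    simp only [R, Finset.mem_compl, Finset.mem_filter, Finset.mem_univ, true_and] at hu hv
    exact hv (hu.tail huv)
  exact hpos.not_ge hnonpos

variable [DecidableRel G.Adj]

theorem crossEdges_eq_sum (S : Finset V) :
    (crossEdges G S : ℤ) = ∑ u ∈ S, ∑ v ∈ Sᶜ, if G.Adj u v then 1 else 0 := by
  have : univ.filter (fun p : V × V => p.1 ∈ S ∧ p.2 ∉ S ∧ G.Adj p.1 p.2) =
      (S ×ˢ Sᶜ).filter fun p => G.Adj p.1 p.2 := by
    ext; simp [and_assoc]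
  rw [crossEdges, this, Finset.card_filter, Finset.sum_product]
  push_cast
  rfl

theorem IsUnitFlow.crossEdges_eq_sum_netOut (hf : G.IsUnitFlow f) {S : Finset V}
    (hS : ∀ u ∈ S, ∀ v, G.Adj u v → f u v ≤ 0 → v ∈ S) :
    (crossEdges G S : ℤ) = ∑ u ∈ S, netOut f u := by
  rw [crossEdges_eq_sum, sum_netOut_eq_sum_compl hf.skew]
  refine Finset.sum_congr rfl fun u hu => Finset.sum_congr rfl fun v hv => ?_
  rw [Finset.mem_compl] at hv
  split_ifs with hadj
  · have := hf.le_one u v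
    by_contra hne
    exact hv (hS u hu v hadj (by omega))
  · exact (hf.eq_zero_of_not_adj u v hadj).symm

end flow

section sources

variable [Fintype V]

def sources (f : V → V → ℤ) : Finset V := univ.filter fun u => netOut f u = 1

def sinks (f : V → V → ℤ) : Finset V := univ.filter fun u => netOut f u = -1

theorem netOut_eq_zero_of_notMem (hf1 : ∀ u, |netOut f u| ≤ 1) {u : V} (hu : u ∉ sources f)
    (hu' : u ∉ sinks f) : netOut f u = 0 := by
  have := abs_le.1 (hf1 u)
  simp only [sources, sinks, Finset.mem_filter, Finset.mem_univ, true_and] at hu hu'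
  omega

variable [DecidableEq V]

theorem card_sinks_eq_card_sources (hskew : ∀ u v, f v u = -f u v)
    (hf1 : ∀ u, |netOut f u| ≤ 1) : #(sinks f) = #(sources f) := by
  have hsplit : ∀ u, netOut f u =
      (if netOut f u = 1 then 1 else 0) - (if netOut f u = -1 then 1 else 0) := fun u => by
    have := abs_le.1 (hf1 u)
    split_ifs <;> omega
  have := sum_netOut_univ hskew
  rw [Finset.sum_congr rfl fun u _ => hsplit u, Finset.sum_sub_distrib, Finset.sum_boole,
    Finset.sum_boole] at this
  simp only [sources, sinks]
  omega

theorem sum_netOut_le_card_sources (hf1 : ∀ u, |netOut f u| ≤ 1) (S : Finset V) :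
    ∑ u ∈ S, netOut f u ≤ #(sources f) :=
  calc ∑ u ∈ S, netOut f u ≤ ∑ u ∈ S, if u ∈ sources f then 1 else 0 :=
        Finset.sum_le_sum fun u _ => by
          have := abs_le.1 (hf1 u)
          split_ifs with h <;> simp_all [sources]; omega
    _ = #(S ∩ sources f) := by rw [Finset.sum_boole, Finset.filter_mem_eq_inter]
    _ ≤ #(sources f) := by exact_mod_cast Finset.card_le_card Finset.inter_subset_right

end sources

def EdgeDisjointPaths (G : SimpleGraph V) (A B : Finset V) (E : Set (Sym2 V)) (m : ℕ) : Prop :=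
  ∃ (a b : Fin m → V) (p : ∀ i, G.Walk (a i) (b i)),
    Function.Injective a ∧ Function.Injective b ∧ (∀ i, a i ∈ A) ∧ (∀ i, b i ∈ B) ∧
    (∀ i, (p i).IsPath) ∧ (∀ i, ∀ e ∈ (p i).edges, e ∈ E) ∧
    ∀ i j, i ≠ j → ∀ e ∈ (p i).edges, e ∉ (p j).edges

namespace EdgeDisjointPaths

variable {A B A' B' : Finset V} {E E' : Set (Sym2 V)} {m : ℕ}

theorem zero : G.EdgeDisjointPaths A B E 0 := by
  refine ⟨Fin.elim0, Fin.elim0, fun i => i.elim0, ?_, ?_, ?_, ?_, ?_, ?_, ?_⟩ <;>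
    intro i <;> exact i.elim0

theorem mono (h : G.EdgeDisjointPaths A B E m) (hA : A ⊆ A') (hB : B ⊆ B') (hE : E ⊆ E') :
    G.EdgeDisjointPaths A' B' E' m := by
  obtain ⟨a, b, p, ha, hb, haA, hbB, hp, hpE, hdisj⟩ := h
  exact ⟨a, b, p, ha, hb, fun i => hA (haA i), fun i => hB (hbB i), hp,
    fun i e he => hE (hpE i e he), hdisj⟩

variable [DecidableEq V]

theorem cons (h : G.EdgeDisjointPaths A B E m) {s w : V} (P : G.Walk s w) (hP : P.IsPath)
    (hs : s ∉ A) (hw : w ∉ B) (hPE : ∀ e ∈ P.edges, e ∉ E) :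
    G.EdgeDisjointPaths (insert s A) (insert w B) (E ∪ {e | e ∈ P.edges}) (m + 1) := by
  obtain ⟨a, b, p, ha, hb, haA, hbB, hp, hpE, hdisj⟩ := h
  refine ⟨Fin.cons s a, Fin.cons w b, Fin.cons P p, ?_, ?_, ?_, ?_, ?_, ?_, ?_⟩
  · exact Fin.cons_injective_iff.2 ⟨fun ⟨i, hi⟩ => hs (hi ▸ haA i), ha⟩
  · exact Fin.cons_injective_iff.2 ⟨fun ⟨i, hi⟩ => hw (hi ▸ hbB i), hb⟩
  · refine Fin.cases ?_ fun i => ?_ <;> simp [haA]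
  · refine Fin.cases ?_ fun i => ?_ <;> simp [hbB]
  · exact Fin.cases hP hp
  · refine Fin.cases ?_ fun i => ?_ <;> intro e he
    · exact Or.inr he
    · exact Or.inl (hpE i e he)
  · refine Fin.cases (Fin.cases ?_ fun j => ?_) fun i => Fin.cases ?_ fun j => ?_ <;>
      intro hij e he he'
    · exact hij rfl
    · exact hPE e he (hpE j e he')
    · exact hPE e he' (hpE i e he)
    · exact hdisj i j (fun h => hij (h ▸ rfl)) e he he'

theorem union_nil (h : G.EdgeDisjointPaths A B E m) {C : Finset V} (hA : Disjoint A C)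
    (hB : Disjoint B C) : G.EdgeDisjointPaths (A ∪ C) (B ∪ C) E (m + #C) := by
  induction C using Finset.induction_on with
  | empty => simpa using h
  | insert v C hv ih =>
    rw [Finset.disjoint_insert_right] at hA hB
    have hvA : v ∉ A ∪ C := by simp [hA.1, hv]
    have hvB : v ∉ B ∪ C := by simp [hB.1, hv]
    rw [Finset.card_insert_of_notMem hv, ← add_assoc]
    refine ((ih hA.2 hB.2).cons (Walk.nil : G.Walk v v) .nil hvA hvB (by simp)).mono ?_ ?_ ?_
    · simp
    · simp
    · simp

end EdgeDisjointPaths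

section decomposition

variable [Fintype V] [DecidableEq V]

def edgeSupport (f : V → V → ℤ) : Set (Sym2 V) := {e | ∃ x y, s(x, y) = e ∧ f x y ≠ 0}

theorem IsUnitFlow.edgeDisjointPaths (hf : G.IsUnitFlow f) (hf1 : ∀ u, |netOut f u| ≤ 1) :
    G.EdgeDisjointPaths (sources f) (sinks f) (edgeSupport f) #(sources f) := by
  obtain ⟨n, hn⟩ : ∃ n, #(sources f) = n := ⟨_, rfl⟩
  induction n generalizing f with
  | zero => exact hn ▸ .zero
  | succ n ih =>
    obtain ⟨s, hs⟩ := Finset.card_pos.1 (by rw [hn]; exact n.succ_pos)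
    have hs1 : netOut f s = 1 := (Finset.mem_filter.1 hs).2
    obtain ⟨w, hreach, hw⟩ := exists_reflTransGen_netOut_neg hf.skew (hs1 ▸ one_pos)
    have hw1 : netOut f w = -1 := by have := abs_le.1 (hf1 w); omega
    have hwsinks : w ∈ sinks f := by simp [sinks, hw1]
    obtain ⟨P, hP, hPpos⟩ := exists_isPath_of_reflTransGen (fun _ _ => hf.adj_of_pos) hreach
    obtain ⟨g, hg, hnet, hzero, hoff⟩ := hf.exists_cancel P hP hPpos
    have hnet' : ∀ u, netOut g u = if u = s ∨ u = w then 0 else netOut f u := fun u => by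
      rw [hnet]
      by_cases hus : u = s <;> by_cases huw : u = w <;> simp_all
    have hsources : sources g = (sources f).erase s := by
      ext u; simp only [sources, Finset.mem_filter, Finset.mem_erase, Finset.mem_univ, hnet']
      grind
    have hsinks : sinks g = (sinks f).erase w := by
      ext u; simp only [sinks, Finset.mem_filter, Finset.mem_erase, Finset.mem_univ, hnet']
      grind
    have hg1 : ∀ u, |netOut g u| ≤ 1 := fun u => by rw [hnet']; split_ifs <;> simp [hf1]
    have hcard : #(sources g) = n := by rw [hsources, Finset.card_erase_of_mem hs, hn]; rfl
    have IH := ih hg hg1 hcard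
    rw [hcard, hsources, hsinks] at IH
    rw [hn]
    refine (IH.cons P hP (by simp) (by simp) ?_).mono (Finset.insert_erase hs).subset
      (Finset.insert_erase hwsinks).subset ?_
    · rintro e he ⟨x, y, rfl, hxy⟩
      exact hxy (hzero x y he)
    · rintro e (⟨x, y, rfl, hxy⟩ | he)
      · exact ⟨x, y, rfl, hoff x y (fun h => hxy (hzero x y h)) ▸ hxy⟩
      · obtain ⟨d, hd, rfl⟩ := List.mem_map.1 he
        exact ⟨d.fst, d.snd, rfl, (hPpos d hd).ne'⟩

end decomposition

section maxFlow

variable [Fintype V] {A B : Finset V}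

structure IsUnitFlowFromTo (G : SimpleGraph V) (A B : Finset V) (f : V → V → ℤ) : Prop
    extends G.IsUnitFlow f where
  abs_netOut_le_one : ∀ u, |netOut f u| ≤ 1
  sources_subset : sources f ⊆ A
  sinks_subset : sinks f ⊆ B

theorem isUnitFlowFromTo_zero : G.IsUnitFlowFromTo A B 0 where
  skew := by simp
  le_one := by simp
  eq_zero_of_not_adj := by simp
  abs_netOut_le_one := by simp [netOut]
  sources_subset := by simp [sources, netOut]
  sinks_subset := by simp [sinks, netOut]

theorem exists_max_isUnitFlowFromTo (G : SimpleGraph V) (A B : Finset V) :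
    ∃ f, G.IsUnitFlowFromTo A B f ∧
      ∀ g, G.IsUnitFlowFromTo A B g → #(sources g) ≤ #(sources f) := by
  obtain ⟨_, ⟨f, hf, rfl⟩, hmax⟩ := BddAbove.exists_isGreatest_of_nonempty
    (S := (fun f => #(sources f)) '' {f | G.IsUnitFlowFromTo A B f})
    ⟨#A, by rintro _ ⟨f, hf, rfl⟩; exact Finset.card_le_card hf.sources_subset⟩
    ⟨_, 0, isUnitFlowFromTo_zero, rfl⟩
  exact ⟨f, hf, fun g hg => hmax ⟨g, hg, rfl⟩⟩

variable [DecidableEq V]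

theorem IsUnitFlowFromTo.augment (hAB : Disjoint A B) (hf : G.IsUnitFlowFromTo A B f) {s w : V}
    (hs : s ∈ A \ sources f) (hw : w ∈ B \ sinks f)
    (hreach : Relation.ReflTransGen (fun u v => G.Adj u v ∧ f u v ≤ 0) s w) :
    ∃ g, G.IsUnitFlowFromTo A B g ∧ #(sources g) = #(sources f) + 1 := by
  rw [Finset.mem_sdiff] at hs hw
  have hdisj := Finset.disjoint_left.1 hAB
  have hs0 : netOut f s = 0 := netOut_eq_zero_of_notMem hf.abs_netOut_le_one hs.2
    fun h => hdisj hs.1 (hf.sinks_subset h)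
  have hw0 : netOut f w = 0 := netOut_eq_zero_of_notMem hf.abs_netOut_le_one
    (fun h => hdisj (hf.sources_subset h) hw.1) hw.2
  have hsw : s ≠ w := fun h => hdisj hs.1 (h ▸ hw.1)
  obtain ⟨P, hP, hres⟩ := exists_isPath_of_reflTransGen (fun _ _ h => h.1) hreach
  obtain ⟨g, hg, hnet, -, -⟩ := hf.exists_augment P hP fun d hd => (hres d hd).2
  have hnet' : ∀ u, netOut g u = if u = s then 1 else if u = w then -1 else netOut f u := by
    intro u
    rw [hnet]
    by_cases hus : u = s <;> by_cases huw : u = w <;> simp_all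
  have hsources : sources g = insert s (sources f) := by
    ext u; simp only [sources, Finset.mem_filter, Finset.mem_insert, Finset.mem_univ, hnet']
    grind
  have hsinks : sinks g = insert w (sinks f) := by
    ext u; simp only [sinks, Finset.mem_filter, Finset.mem_insert, Finset.mem_univ, hnet']
    grind
  refine ⟨g, ⟨hg, fun u => ?_, ?_, ?_⟩, ?_⟩
  · rw [hnet']
    split_ifs <;> simp [hf.abs_netOut_le_one]
  · rw [hsources]
    exact Finset.insert_subset hs.1 hf.sources_subset
  · rw [hsinks]
    exact Finset.insert_subset hw.1 hf.sinks_subset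
  · rw [hsources, Finset.card_insert_of_notMem hs.2]

variable [DecidableRel G.Adj]

theorem IsUnitFlowFromTo.exists_cut (hAB : Disjoint A B) (hf : G.IsUnitFlowFromTo A B f)
    (hmax : ∀ g, G.IsUnitFlowFromTo A B g → #(sources g) ≤ #(sources f)) :
    ∃ S : Finset V, A \ sources f ⊆ S ∧ Disjoint S (B \ sinks f) ∧
      crossEdges G S ≤ #(sources f) := by
  classical
  let S := univ.filter fun v =>
    ∃ a ∈ A \ sources f, Relation.ReflTransGen (fun u v => G.Adj u v ∧ f u v ≤ 0) a v
  refine ⟨S, fun a ha => ?_, Finset.disjoint_left.2 fun w hwS hw => ?_, ?_⟩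
  · exact Finset.mem_filter.2 ⟨Finset.mem_univ a, a, ha, .refl⟩
  · obtain ⟨s, hs, hreach⟩ := (Finset.mem_filter.1 hwS).2
    obtain ⟨g, hg, hcard⟩ := hf.augment hAB hs hw hreach
    have := hmax g hg
    omega
  · have hclosed : ∀ u ∈ S, ∀ v, G.Adj u v → f u v ≤ 0 → v ∈ S := by
      intro u hu v huv hres
      obtain ⟨s, hs, hreach⟩ := (Finset.mem_filter.1 hu).2
      exact Finset.mem_filter.2 ⟨Finset.mem_univ v, s, hs, hreach.tail ⟨huv, hres⟩⟩
    have := hf.crossEdges_eq_sum_netOut hclosed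
    have := sum_netOut_le_card_sources hf.abs_netOut_le_one S
    omega

end maxFlow

section conductance

variable [Fintype V] [DecidableRel G.Adj]

theorem card_le_volume_of_preconnected [Nontrivial V] (hG : G.Preconnected) (S : Finset V) :
    #S ≤ volume G S := by
  simpa [volume] using Finset.card_nsmul_le_sum S (fun v => G.degree v) 1
    fun v _ => hG.degree_pos_of_nontrivial v

variable [DecidableEq V] {A B : Finset V}

theorem exists_edgeDisjointPaths_of_conductance (hconn : G.Connected) {φ : ℝ} (hφ : 0 ≤ φ)
    (hcond : ∀ S : Finset V, S.Nonempty → S ≠ univ →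
      φ * min (volume G S : ℝ) (volume G Sᶜ : ℝ) ≤ (crossEdges G S : ℝ))
    (hAB : Disjoint A B) (hcard : #A ≤ #B) :
    ∃ m : ℕ, φ * #A ≤ (1 + φ) * m ∧ G.EdgeDisjointPaths A B Set.univ m := by
  obtain ⟨f, hf, hmax⟩ := exists_max_isUnitFlowFromTo G A B
  set m := #(sources f)
  refine ⟨m, ?_, (hf.edgeDisjointPaths hf.abs_netOut_le_one).mono hf.sources_subset
    hf.sinks_subset (Set.subset_univ _)⟩
  rcases le_or_gt #A m with hm | hm
  · have : (#A : ℝ) ≤ m := by exact_mod_cast hm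
    nlinarith
  obtain ⟨S, hAS, hSB, hcut⟩ := hf.exists_cut hAB hmax
  have hA0 : #(A \ sources f) = #A - m := Finset.card_sdiff_of_subset hf.sources_subset
  have hB0 : #(B \ sinks f) = #B - m := by
    rw [Finset.card_sdiff_of_subset hf.sinks_subset,
      card_sinks_eq_card_sources hf.skew hf.abs_netOut_le_one]
  obtain ⟨s, hs⟩ : (A \ sources f).Nonempty := Finset.card_pos.1 (by omega)
  obtain ⟨w, hw⟩ : (B \ sinks f).Nonempty := Finset.card_pos.1 (by omega)
  have hsw : s ≠ w := fun h => Finset.disjoint_left.1 hAB (Finset.mem_sdiff.1 hs).1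
    (h ▸ (Finset.mem_sdiff.1 hw).1)
  have : Nontrivial V := ⟨s, w, hsw⟩
  have hvolS : #A - m ≤ volume G S := hA0 ▸
    (Finset.card_le_card hAS).trans (card_le_volume_of_preconnected hconn.preconnected S)
  have hvolSc : #A - m ≤ volume G Sᶜ := by
    have := (Finset.card_le_card (Finset.subset_compl_iff_disjoint_left.2 hSB)).trans
      (card_le_volume_of_preconnected hconn.preconnected Sᶜ)
    omega
  have hcondS := hcond S ⟨s, hAS hs⟩ fun h =>
    Finset.disjoint_left.1 hSB (h ▸ Finset.mem_univ w) hw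
  have hmin : (#A : ℝ) - m ≤ min (volume G S : ℝ) (volume G Sᶜ : ℝ) := by
    rw [← Nat.cast_sub hm.le]
    exact le_min (by exact_mod_cast hvolS) (by exact_mod_cast hvolSc)
  have hcutR : (crossEdges G S : ℝ) ≤ m := by exact_mod_cast hcut
  nlinarith

end conductance

end SimpleGraph

open SimpleGraph in
theorem stmt_13_general {V : Type*} [Fintype V] [DecidableEq V]
    (G : SimpleGraph V) [DecidableRel G.Adj]
    (hconn : G.Connected)
    (hcond : ∀ S : Finset V, S.Nonempty → S ≠ Finset.univ →
      (1 / 2 : ℝ) * min (volume G S : ℝ) (volume G Sᶜ : ℝ) ≤ (crossEdges G S : ℝ))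
    (T V' : Finset V) (k : ℕ) (hk : T.card = k)
    (hV' : (0.1 : ℝ) * (Fintype.card V : ℝ) ≤ (V'.card : ℝ))
    (hkle : (k : ℝ) ≤ 0.1 * (Fintype.card V : ℝ)) :
    ∃ (mm : ℕ), (k : ℝ) ≤ 3 * mm ∧
      ∃ (a : Fin mm → V) (b : Fin mm → V) (p : ∀ i : Fin mm, G.Walk (a i) (b i)),
        Function.Injective a ∧ Function.Injective b ∧
        (∀ i, a i ∈ T) ∧ (∀ i, b i ∈ V') ∧
        (∀ i, (p i).IsPath) ∧
        (∀ i j, i ≠ j → ∀ e : Sym2 V, e ∈ (p i).edges → e ∉ (p j).edges) := by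
  have hkV' : k ≤ #V' := by exact_mod_cast hkle.trans hV'
  have hT := Finset.card_sdiff_add_card_inter T V'
  have hV := Finset.card_sdiff_add_card_inter V' T
  rw [Finset.inter_comm] at hV
  obtain ⟨m, hm, hpaths⟩ := exists_edgeDisjointPaths_of_conductance hconn (by norm_num) hcond
    (disjoint_sdiff_sdiff (x := T) (y := V')) (by omega)
  refine ⟨m + #(T ∩ V'), ?_, ?_⟩
  · have : (#(T \ V') : ℝ) + #(T ∩ V') = k := by exact_mod_cast hk ▸ hT
    push_cast
    linarith
  obtain ⟨a, b, p, ha, hb, haT, hbV', hp, -, hdisj⟩ :=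
    (hpaths.union_nil (Finset.disjoint_sdiff_inter T V')
      (by simpa [Finset.inter_comm] using Finset.disjoint_sdiff_inter V' T)).mono
      (Finset.sdiff_union_inter T V').subset
      (Finset.union_subset Finset.sdiff_subset Finset.inter_subset_right) subset_rfl
  exact ⟨a, b, p, ha, hb, haT, hbV', hp, hdisj⟩

/-- Let `G` be a connected graph with conductance at least `1/2` and
maximum degree at most `6`, let `T` be a set of `k` vertices and `V' ⊆ V` with
`|V'| ≥ 0.1·|V|` and `k ≤ 0.1·|V|`. Then there exist at least `k/3` edge-disjoint paths in
`G`, each connecting a distinct vertex of `T` to a distinct vertex of `V'`. -/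
theorem stmt_13 {V : Type*} [Fintype V] [DecidableEq V]
    (G : SimpleGraph V) [DecidableRel G.Adj]
    (hconn : G.Connected) (hdeg : ∀ v : V, G.degree v ≤ 6)
    (hcond : ∀ S : Finset V, S.Nonempty → S ≠ Finset.univ →
      (1 / 2 : ℝ) * min (volume G S : ℝ) (volume G Sᶜ : ℝ) ≤ (crossEdges G S : ℝ))
    (T V' : Finset V) (k : ℕ) (hk : T.card = k)
    (hV' : (0.1 : ℝ) * (Fintype.card V : ℝ) ≤ (V'.card : ℝ))
    (hkle : (k : ℝ) ≤ 0.1 * (Fintype.card V : ℝ)) :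
    ∃ (mm : ℕ), (k : ℝ) ≤ 3 * mm ∧
      ∃ (a : Fin mm → V) (b : Fin mm → V) (p : ∀ i : Fin mm, G.Walk (a i) (b i)),
        Function.Injective a ∧ Function.Injective b ∧
        (∀ i, a i ∈ T) ∧ (∀ i, b i ∈ V') ∧
        (∀ i, (p i).IsPath) ∧
        (∀ i j, i ≠ j → ∀ e : Sym2 V, e ∈ (p i).edges → e ∉ (p j).edges) :=
  stmt_13_general G hconn hcond T V' k hk hV' hkle
end

section
/- Let G be a tree with positive edge lengths, T ⊆ V(G) a set of terminals, and (ℱ, δ) a pair where ℱ is a partition of V(G) separating terminals and δ is a semi-metric on ℱ such that δ(F_t, F_{t'}) = dist_G(t, t') for all terminals t, t' (F_t denotes the cluster containing t). Then there exists a mapping φ from ℱ into the geometric realization (continuization) of G such that φ(F_t) = t for every terminal t, and for every pair F, F' ∈ ℱ, the distance in the continuization between φ(F) and φ(F') is at most δ(F, F'). -/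
/-- The shortest-path distance in `G` with respect to edge lengths `ℓ`:
the infimum of the total length over all walks from `u` to `v`. -/
noncomputable def wdist {V : Type*} (G : SimpleGraph V) (ℓ : Sym2 V → ℝ) (u v : V) : ℝ :=
  sInf (Set.range fun w : G.Walk u v => (w.edges.map ℓ).sum)

/-- Finite Helly property for balls in a geodesic real tree. -/
theorem helly_balls {Y : Type*} [MetricSpace Y] [Nonempty Y]
    (hgeo : ∀ y y' : Y, ∀ s : ℝ, 0 ≤ s → s ≤ dist y y' →
      ∃ p : Y, dist y p = s ∧ dist p y' = dist y y' - s)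
    (hbranch : ∀ y₁ y₂ y₃ p : Y, dist y₁ p + dist p y₂ = dist y₁ y₂ →
      dist y₁ p + dist p y₃ = dist y₁ y₃ ∨ dist y₂ p + dist p y₃ = dist y₂ y₃)
    {ι' : Type*} [DecidableEq ι'] (A : Finset ι') (f : ι' → Y) (r : ι' → ℝ)
    (hr : ∀ i ∈ A, 0 ≤ r i)
    (hpair : ∀ i ∈ A, ∀ j ∈ A, dist (f i) (f j) ≤ r i + r j) :
    ∃ p : Y, ∀ i ∈ A, dist p (f i) ≤ r i := by
  classical
  revert hr hpair
  induction A using Finset.induction_on with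
  | empty => exact fun _ _ => ⟨Classical.arbitrary Y, by simp⟩
  | @insert j A hj ih =>
    intro hr hpair
    obtain ⟨p, hp⟩ := ih (fun i hi => hr i (Finset.mem_insert_of_mem hi))
      (fun i hi k hk => hpair i (Finset.mem_insert_of_mem hi) k (Finset.mem_insert_of_mem hk))
    have hrj : 0 ≤ r j := hr j (Finset.mem_insert_self _ _)
    set d0 := dist (f j) p with hd0
    set s := min (r j) d0 with hs
    have hs0 : 0 ≤ s := le_min hrj dist_nonneg
    have hsle : s ≤ dist (f j) p := min_le_right _ _
    obtain ⟨q, hq1, hq2⟩ := hgeo (f j) p s hs0 hsle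
    refine ⟨q, ?_⟩
    intro i hi
    rcases Finset.mem_insert.mp hi with rfl | hiA
    · rw [dist_comm, hq1]; exact min_le_left _ _
    · have hgeod : dist (f j) q + dist q p = dist (f j) p := by
        rw [hq1, hq2]; ring
      rcases hbranch (f j) p (f i) q hgeod with h | h
      · -- dist (f j) q + dist q (f i) = dist (f j) (f i)
        have hqi : dist q (f i) = dist (f j) (f i) - s := by
          rw [hq1] at h; linarith
        rcases le_or_gt (r j) d0 with hc | hc
        · have hse : s = r j := min_eq_left hc
          have := hpair j (Finset.mem_insert_self _ _) i (Finset.mem_insert_of_mem hiA)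
          rw [hqi, hse]; linarith
        · have hse : s = d0 := min_eq_right hc.le
          have htr : dist (f j) (f i) ≤ d0 + dist p (f i) := by
            rw [hd0]; exact dist_triangle _ _ _
          have := hp i hiA
          rw [hqi, hse]; linarith
      · -- dist p q + dist q (f i) = dist p (f i)
        have : dist q (f i) ≤ dist p (f i) := by
          have h0 : 0 ≤ dist p q := dist_nonneg
          linarith
        exact this.trans (hp i hiA)

/-- Let `G` be a tree with positive edge lengths, `T` a set of terminals,
and `(ℱ, δ)` a solution of 0-Extension with Steiner nodes: `ℱ` is a partition of `V(G)`
separating terminals (encoded by the quotient map `c : V → C`, surjective and injective on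
`T`) and `δ` is a semi-metric on the clusters with `δ(F_t, F_{t'}) = dist_G(t,t')` for all
terminals. Let `(Y, dist)` be the continuization (geometric realization) of `G`, encoded as
a geodesic real-tree metric space into which the vertices embed isometrically via `ι`.
Then there is a map `φ : ℱ → Y` with `φ(F_t) = t` for every terminal `t`, and
`dist(φ(F), φ(F')) ≤ δ(F, F')` for all clusters `F, F'`. -/
theorem stmt_14 {V C Y : Type*} [Fintype V] [MetricSpace Y]
    (G : SimpleGraph V) (hG : G.IsTree)
    (ℓ : Sym2 V → ℝ) (hℓ : ∀ e ∈ G.edgeSet, 0 < ℓ e)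
    -- `Y` is the continuization of `(G, ℓ)`:
    (ι : V → Y) (hiso : ∀ u v : V, dist (ι u) (ι v) = wdist G ℓ u v)
    (hgeo : ∀ y y' : Y, ∀ s : ℝ, 0 ≤ s → s ≤ dist y y' →
      ∃ p : Y, dist y p = s ∧ dist p y' = dist y y' - s)
    (huniq : ∀ y y' p q : Y,
      dist y p + dist p y' = dist y y' → dist y q + dist q y' = dist y y' →
      dist y p = dist y q → p = q)
    (hbranch : ∀ y₁ y₂ y₃ p : Y, dist y₁ p + dist p y₂ = dist y₁ y₂ →
      dist y₁ p + dist p y₃ = dist y₁ y₃ ∨ dist y₂ p + dist p y₃ = dist y₂ y₃)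
    -- the terminals and the solution `(ℱ, δ)`:
    (T : Set V) (c : V → C) (hsurj : Function.Surjective c) (hsep : Set.InjOn c T)
    (δ : C → C → ℝ)
    (hnonneg : ∀ F F', 0 ≤ δ F F') (hsymm : ∀ F F', δ F F' = δ F' F)
    (hself : ∀ F, δ F F = 0) (htri : ∀ F F' F'', δ F F'' ≤ δ F F' + δ F' F'')
    (hterm : ∀ t ∈ T, ∀ t' ∈ T, δ (c t) (c t') = wdist G ℓ t t') :
    ∃ φ : C → Y, (∀ t ∈ T, φ (c t) = ι t) ∧
      ∀ F F' : C, dist (φ F) (φ F') ≤ δ F F' := by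
  classical
  by_cases hV : Nonempty V
  · haveI : Nonempty Y := ⟨ι (Classical.arbitrary V)⟩
    haveI : Fintype C := Fintype.ofSurjective c hsurj
    have hdist_term : ∀ t ∈ T, ∀ t' ∈ T, dist (ι t) (ι t') = δ (c t) (c t') := by
      intro t ht t' ht'
      rw [hiso, hterm t ht t' ht']
    -- base map: terminals mapped to themselves
    set φ₀ : C → Y := fun F =>
      if h : ∃ t, t ∈ T ∧ c t = F then ι (Classical.choose h) else Classical.arbitrary Y
      with hφ₀def
    have hφ₀ : ∀ t ∈ T, φ₀ (c t) = ι t := by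
      intro t ht
      have h : ∃ t', t' ∈ T ∧ c t' = c t := ⟨t, ht, rfl⟩
      have hspec := Classical.choose_spec h
      simp only [hφ₀def, dif_pos h]
      exact congrArg ι (hsep hspec.1 ht hspec.2)
    have main : ∀ S : Finset C, ∃ φ : C → Y, (∀ t ∈ T, φ (c t) = ι t) ∧
        ∀ F F' : C, (F ∈ S ∨ F ∈ c '' T) → (F' ∈ S ∨ F' ∈ c '' T) →
          dist (φ F) (φ F') ≤ δ F F' := by
      intro S
      induction S using Finset.induction_on with
      | empty =>
        refine ⟨φ₀, hφ₀, ?_⟩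
        rintro F F' (h1 | ⟨t, ht, rfl⟩) (h2 | ⟨t', ht', rfl⟩)
        · exact absurd h1 (Finset.notMem_empty _)
        · exact absurd h1 (Finset.notMem_empty _)
        · exact absurd h2 (Finset.notMem_empty _)
        · rw [hφ₀ t ht, hφ₀ t' ht', hdist_term t ht t' ht']
      | @insert F₀ S hF₀ ih =>
        obtain ⟨φ, hφT, hφd⟩ := ih
        by_cases hmem : F₀ ∈ c '' T
        · refine ⟨φ, hφT, ?_⟩
          intro F F' h1 h2
          have h1' : F ∈ S ∨ F ∈ c '' T := by
            rcases h1 with h1 | h1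
            · rcases Finset.mem_insert.mp h1 with rfl | h1
              · exact Or.inr hmem
              · exact Or.inl h1
            · exact Or.inr h1
          have h2' : F' ∈ S ∨ F' ∈ c '' T := by
            rcases h2 with h2 | h2
            · rcases Finset.mem_insert.mp h2 with rfl | h2
              · exact Or.inr hmem
              · exact Or.inl h2
            · exact Or.inr h2
          exact hφd F F' h1' h2'
        · -- new Steiner cluster: place it via Helly
          set A : Finset C := S ∪ Finset.univ.filter (fun F => F ∈ c '' T) with hAdef
          have hA : ∀ F, F ∈ A ↔ (F ∈ S ∨ F ∈ c '' T) := by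
            intro F; simp [hAdef]
          obtain ⟨p, hp⟩ := helly_balls hgeo hbranch A φ (fun F => δ F₀ F)
            (fun i _ => hnonneg _ _)
            (fun i hi k hk => by
              refine (hφd i k ((hA i).1 hi) ((hA k).1 hk)).trans ?_
              have := htri i F₀ k
              rw [hsymm i F₀] at this
              linarith)
          have hne : ∀ t ∈ T, c t ≠ F₀ := by
            intro t ht h
            exact hmem ⟨t, ht, h⟩
          refine ⟨Function.update φ F₀ p, ?_, ?_⟩
          · intro t ht
            rw [Function.update_of_ne (hne t ht)]
            exact hφT t ht
          · intro F F' h1 h2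
            by_cases e1 : F = F₀ <;> by_cases e2 : F' = F₀
            · subst e1; subst e2
              simp only [Function.update_self, dist_self]
              exact hnonneg _ _
            · subst e1
              have h2' : F' ∈ S ∨ F' ∈ c '' T := by
                rcases h2 with h2 | h2
                · rcases Finset.mem_insert.mp h2 with rfl | h2
                  · exact absurd rfl e2
                  · exact Or.inl h2
                · exact Or.inr h2
              rw [Function.update_self, Function.update_of_ne e2]
              exact hp F' ((hA F').2 h2')
            · subst e2
              have h1' : F ∈ S ∨ F ∈ c '' T := by
                rcases h1 with h1 | h1
                · rcases Finset.mem_insert.mp h1 with rfl | h1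
                  · exact absurd rfl e1
                  · exact Or.inl h1
                · exact Or.inr h1
              rw [Function.update_self, Function.update_of_ne e1, dist_comm, hsymm]
              exact hp F ((hA F).2 h1')
            · have h1' : F ∈ S ∨ F ∈ c '' T := by
                rcases h1 with h1 | h1
                · rcases Finset.mem_insert.mp h1 with rfl | h1
                  · exact absurd rfl e1
                  · exact Or.inl h1
                · exact Or.inr h1
              have h2' : F' ∈ S ∨ F' ∈ c '' T := by
                rcases h2 with h2 | h2
                · rcases Finset.mem_insert.mp h2 with rfl | h2
                  · exact absurd rfl e2
                  · exact Or.inl h2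
                · exact Or.inr h2
              rw [Function.update_of_ne e1, Function.update_of_ne e2]
              exact hφd F F' h1' h2'
    obtain ⟨φ, hφT, hφd⟩ := main Finset.univ
    exact ⟨φ, hφT, fun F F' => hφd F F' (Or.inl (Finset.mem_univ _)) (Or.inl (Finset.mem_univ _))⟩
  · haveI : IsEmpty V := not_nonempty_iff.mp hV
    exact ⟨fun F => isEmptyElim (hsurj F).choose,
      fun t _ => isEmptyElim t,
      fun F F' => isEmptyElim (hsurj F).choose⟩
end

section
/- Let T be a tree with edge lengths and terminal set S ⊆ V(T), let δ be a semi-metric on a set containing S that restricts to the tree metric on S, and for a point x define ν(x) = min over s,s' ∈ S of (δ(x,s)+δ(x,s')−d_T(s,s'))/2, and let φ(x) be the point on the tree path between a minimizing pair (s₁,s₂) at distance δ(x,s₁)−ν(x) from s₁. Then for every terminal s ∈ S, the tree distance from φ(x) to s is at most δ(x,s) − ν(x). -/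
open Finset

/-- Let `G` be a tree with edge lengths `ℓ`, terminal set `S`, and `Y` its
continuization (a geodesic real tree into which the vertices embed isometrically via `ι`).
Let `dx : V → ℝ` record the `δ`-distances from an external point `x` to the terminals,
restricting (together with the tree metric) to a semi-metric, and set
`ν(x) = min_{s,s' ∈ S} (dx s + dx s' − d_T(s,s'))/2`. If `(s₁, s₂)` attains the minimum and
`φ(x)` is the point of the tree path between `s₁` and `s₂` at distance `dx s₁ − ν(x)` from
`s₁` (hence at distance `dx s₂ − ν(x)` from `s₂`), then `d_T(φ(x), s) ≤ dx s − ν(x)` for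
every terminal `s ∈ S`. -/
theorem stmt_15 {V Y : Type*} [Fintype V] [MetricSpace Y]
    (G : SimpleGraph V) (hG : G.IsTree)
    (ℓ : Sym2 V → ℝ) (hℓ : ∀ e ∈ G.edgeSet, 0 < ℓ e)
    -- `Y` is the continuization of `(G, ℓ)`:
    (ι : V → Y) (hiso : ∀ u v : V, dist (ι u) (ι v) = wdist G ℓ u v)
    (hgeo : ∀ y y' : Y, ∀ s : ℝ, 0 ≤ s → s ≤ dist y y' →
      ∃ p : Y, dist y p = s ∧ dist p y' = dist y y' - s)
    (hbranch : ∀ y₁ y₂ y₃ p : Y, dist y₁ p + dist p y₂ = dist y₁ y₂ →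
      dist y₁ p + dist p y₃ = dist y₁ y₃ ∨ dist y₂ p + dist p y₃ = dist y₂ y₃)
    -- the terminals and the distances `dx` from the external point `x`:
    (S : Finset V) (hS : S.Nonempty) (dx : V → ℝ)
    (hdx₁ : ∀ s ∈ S, ∀ s' ∈ S, wdist G ℓ s s' ≤ dx s + dx s')
    (hdx₂ : ∀ s ∈ S, ∀ s' ∈ S, dx s ≤ dx s' + wdist G ℓ s s')
    (s₁ s₂ : V) (hs₁ : s₁ ∈ S) (hs₂ : s₂ ∈ S)
    (hmin : ∀ s ∈ S, ∀ s' ∈ S,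
      (dx s₁ + dx s₂ - wdist G ℓ s₁ s₂) / 2 ≤ (dx s + dx s' - wdist G ℓ s s') / 2)
    (p : Y)
    (hp₁ : dist (ι s₁) p = dx s₁ - (dx s₁ + dx s₂ - wdist G ℓ s₁ s₂) / 2)
    (hp₂ : dist p (ι s₂) = dx s₂ - (dx s₁ + dx s₂ - wdist G ℓ s₁ s₂) / 2) :
    ∀ s ∈ S, dist p (ι s) ≤ dx s - (dx s₁ + dx s₂ - wdist G ℓ s₁ s₂) / 2 := by
  intro s hs
  have hd12 : dist (ι s₁) (ι s₂) = wdist G ℓ s₁ s₂ := hiso _ _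
  have hsum : dist (ι s₁) p + dist p (ι s₂) = dist (ι s₁) (ι s₂) := by
    rw [hp₁, hp₂, hd12]; ring
  have h1s : dist (ι s₁) (ι s) = wdist G ℓ s₁ s := hiso _ _
  have h2s : dist (ι s₂) (ι s) = wdist G ℓ s₂ s := hiso _ _
  rcases hbranch (ι s₁) (ι s₂) (ι s) p hsum with h | h
  · have := hmin s₁ hs₁ s hs
    linarith
  · have := hmin s₂ hs₂ s hs
    rw [dist_comm (ι s₂) p] at h
    linarith
end

section
/- Let (Y, ρ) be a metric space, X a finite set with a semi-metric δ, A: X → ℝ≥0 a function satisfying |A(x) − A(x')| ≤ δ(x, x') for all x, x' ∈ X, and g > 0. Suppose that for every real r ∈ [g/60, g/30] there is a map φ_r: X → Y such that ρ(φ_r(x), φ_r(x')) ≤ 2δ(x,x') whenever A(x), A(x'), δ(x,x') ≤ r, and φ_r(x) = y₀ (a fixed basepoint) whenever A(x) > r, and the diameter of the image is at most Δ. Then choosing r uniformly at random from [g/60, g/30], for every pair x, x' with δ(x,x') ≤ g/60: E[ρ(φ_r(x), φ_r(x'))] ≤ (60Δ/g + 2) · δ(x,x'). -/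
/-!
For a fixed pair `x, x'` and each `r`, the distance `ρ(φ_r x, φ_r x')` is `0` when `r` lies below
both `A x, A x'`, at most `2δ(x,x')` when it lies above both, and at most `Δ` in between. So it is
bounded by `2δ(x,x') + Δ · 1_{[min A, max A]}(r)`, and averaging over `[g/60, g/30]` costs at most
`Δ · |A x - A x'| / (g/60) ≤ 60 Δ δ(x,x') / g` for the middle term.
-/

open MeasureTheory Set

theorem dist_le_add_indicator_of_threshold {Y : Type*} [PseudoMetricSpace Y]
    {p q y₀ : Y} {a b r L Δ : ℝ} (hL : 0 ≤ L)
    (hclose : a ≤ r → b ≤ r → dist p q ≤ L) (hp : r < a → p = y₀) (hq : r < b → q = y₀)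
    (hdiam : dist p q ≤ Δ) :
    dist p q ≤ L + (Icc (min a b) (max a b)).indicator (fun _ => Δ) r := by
  have hind : 0 ≤ (Icc (min a b) (max a b)).indicator (fun _ => Δ) r :=
    indicator_nonneg (fun _ _ => dist_nonneg.trans hdiam) r
  rcases lt_or_ge r (min a b) with hlow | hlow
  · rw [hp (hlow.trans_le (min_le_left a b)), hq (hlow.trans_le (min_le_right a b)), dist_self]
    linarith
  rcases le_or_gt (max a b) r with hhigh | hhigh
  · have := hclose ((le_max_left a b).trans hhigh) ((le_max_right a b).trans hhigh)
    linarith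
  · rw [indicator_of_mem (mem_Icc.mpr ⟨hlow, hhigh.le⟩)]
    linarith

theorem setAverage_Icc_le_add_of_le_indicator {f : ℝ → ℝ} {a b c d C D : ℝ}
    (hab : a < b) (hcd : c ≤ d) (hD : 0 ≤ D) (hf0 : ∀ r, 0 ≤ f r)
    (hf : ∀ r ∈ Icc a b, f r ≤ C + (Icc c d).indicator (fun _ => D) r) :
    ⨍ r in Icc a b, f r ≤ C + D * (d - c) / (b - a) := by
  set G : ℝ → ℝ := fun r => C + (Icc c d).indicator (fun _ => D) r
  have hGint : IntegrableOn G (Icc a b) :=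
    (integrable_const C).add ((integrable_const D).indicator measurableSet_Icc)
  have hint : ∫ r in Icc a b, f r ≤ ∫ r in Icc a b, G r :=
    integral_mono_of_nonneg (.of_forall hf0) hGint
      ((ae_restrict_iff' measurableSet_Icc).mpr (.of_forall hf))
  have hmeas : (volume.restrict (Icc a b)).real (Icc c d) ≤ d - c := by
    calc (volume.restrict (Icc a b)).real (Icc c d) ≤ volume.real (Icc c d) :=
          ENNReal.toReal_mono measure_Icc_lt_top.ne (Measure.restrict_le_self _)
      _ = d - c := Real.volume_real_Icc_of_le hcd
  have hG : ∫ r in Icc a b, G r ≤ C * (b - a) + D * (d - c) := by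
    rw [integral_add (integrable_const C) ((integrable_const D).indicator measurableSet_Icc),
      integral_const, integral_indicator_const _ measurableSet_Icc,
      measureReal_restrict_apply_univ, Real.volume_real_Icc_of_le hab.le, smul_eq_mul,
      smul_eq_mul]
    linarith [mul_le_mul_of_nonneg_left hmeas hD]
  have hba : 0 < b - a := sub_pos.mpr hab
  rw [setAverage_eq, Real.volume_real_Icc_of_le hab.le, smul_eq_mul, inv_mul_le_iff₀ hba]
  calc ∫ r in Icc a b, f r ≤ C * (b - a) + D * (d - c) := hint.trans hG
    _ = (b - a) * (C + D * (d - c) / (b - a)) := by field_simp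

theorem stmt_16_general {X Y : Type*} [MetricSpace Y]
    (δ : X → X → ℝ)
    (A : X → ℝ) (hLip : ∀ x x', |A x - A x'| ≤ δ x x')
    (g Δ : ℝ) (hg : 0 < g) (y₀ : Y) (φ : ℝ → X → Y)
    (hclose : ∀ r ∈ Set.Icc (g / 60) (g / 30), ∀ x x' : X,
      A x ≤ r → A x' ≤ r → δ x x' ≤ r → dist (φ r x) (φ r x') ≤ 2 * δ x x')
    (hfar : ∀ r ∈ Set.Icc (g / 60) (g / 30), ∀ x : X, r < A x → φ r x = y₀)
    (hdiam : ∀ r ∈ Set.Icc (g / 60) (g / 30), ∀ x x' : X, dist (φ r x) (φ r x') ≤ Δ)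
    (x x' : X) (hxx' : δ x x' ≤ g / 60) :
    ⨍ r in Set.Icc (g / 60) (g / 30), dist (φ r x) (φ r x')
      ≤ (60 * Δ / g + 2) * δ x x' := by
  have hδ : 0 ≤ δ x x' := (abs_nonneg _).trans (hLip x x')
  have hspread : max (A x) (A x') - min (A x) (A x') ≤ δ x x' := by
    rw [max_sub_min_eq_abs']
    exact hLip x x'
  have hleft : g / 60 ∈ Set.Icc (g / 60) (g / 30) := ⟨le_rfl, by linarith⟩
  have hΔ : 0 ≤ Δ := dist_nonneg.trans (hdiam _ hleft x x)
  have hpointwise : ∀ r ∈ Set.Icc (g / 60) (g / 30), dist (φ r x) (φ r x') ≤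
      2 * δ x x' + (Set.Icc (min (A x) (A x')) (max (A x) (A x'))).indicator (fun _ => Δ) r :=
    fun r hr => dist_le_add_indicator_of_threshold (by positivity)
      (fun hxr hx'r => hclose r hr x x' hxr hx'r (hxx'.trans hr.1))
      (hfar r hr x) (hfar r hr x') (hdiam r hr x x')
  calc ⨍ r in Set.Icc (g / 60) (g / 30), dist (φ r x) (φ r x')
      ≤ 2 * δ x x' + Δ * (max (A x) (A x') - min (A x) (A x')) / (g / 30 - g / 60) :=
        setAverage_Icc_le_add_of_le_indicator (by linarith) min_le_max hΔ
          (fun _ => dist_nonneg) hpointwise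
    _ ≤ 2 * δ x x' + Δ * δ x x' / (g / 30 - g / 60) := by
        gcongr
        linarith
    _ = (60 * Δ / g + 2) * δ x x' := by
        field_simp
        ring

/-- Let `(Y, ρ)` be a metric space with basepoint `y₀`, `X` a finite set
with a semi-metric `δ`, `A : X → ℝ≥0` with `|A(x) − A(x')| ≤ δ(x,x')`, and `g > 0`. Suppose
that for every `r ∈ [g/60, g/30]` there is a map `φ_r : X → Y` with:
`ρ(φ_r(x), φ_r(x')) ≤ 2δ(x,x')` whenever `A(x), A(x'), δ(x,x') ≤ r`; `φ_r(x) = y₀` whenever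
`A(x) > r`; and the image has diameter at most `Δ`. Then for `r` uniform on `[g/60, g/30]`
and every pair with `δ(x,x') ≤ g/60`:
`E[ρ(φ_r(x), φ_r(x'))] ≤ (60Δ/g + 2)·δ(x,x')`. -/
theorem stmt_16 {X Y : Type*} [Fintype X] [MetricSpace Y]
    (δ : X → X → ℝ)
    (hnonneg : ∀ a b, 0 ≤ δ a b) (hsymm : ∀ a b, δ a b = δ b a)
    (hself : ∀ a, δ a a = 0) (htri : ∀ a b c, δ a c ≤ δ a b + δ b c)
    (A : X → ℝ) (hA0 : ∀ x, 0 ≤ A x) (hLip : ∀ x x', |A x - A x'| ≤ δ x x')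
    (g Δ : ℝ) (hg : 0 < g) (y₀ : Y) (φ : ℝ → X → Y)
    (hclose : ∀ r ∈ Set.Icc (g / 60) (g / 30), ∀ x x' : X,
      A x ≤ r → A x' ≤ r → δ x x' ≤ r → dist (φ r x) (φ r x') ≤ 2 * δ x x')
    (hfar : ∀ r ∈ Set.Icc (g / 60) (g / 30), ∀ x : X, r < A x → φ r x = y₀)
    (hdiam : ∀ r ∈ Set.Icc (g / 60) (g / 30), ∀ x x' : X, dist (φ r x) (φ r x') ≤ Δ)
    (x x' : X) (hxx' : δ x x' ≤ g / 60) :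
    ⨍ r in Set.Icc (g / 60) (g / 30), dist (φ r x) (φ r x')
      ≤ (60 * Δ / g + 2) * δ x x' :=
  stmt_16_general δ A hLip g Δ hg y₀ φ hclose hfar hdiam x x' hxx'
end
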